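/- arXiv:2511.17000 — 8 statements merged into one kernel-verified Lean document; each statement's English description precedes it below -/
import Mathlib

section
/- Let H be a 3-uniform hypergraph on vertex set [n] with matching number at most s. Define B as the set of vertices of H with degree at most 3sn. Then the number of edges of H entirely contained in B is at most 9s²n. -/
/-!
Take a maximum matching `M` among the edges lying inside `B`. By maximality every such edge meets
the vertex set `V` of `M`, which has at most `3s` vertices, all in `B`. Hence the number of edges
inside `B` is at most `∑_{v ∈ V} d(v) ≤ 3s · 3sn`.
-/

open Finset

/-- Degree of a vertex in a 3-graph. -/
def degH {n : ℕ} (H : Finset (Finset (Fin n))) (v : Fin n) : ℕ :=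
  (H.filter (fun e => v ∈ e)).card

/-- `H` is a 3-uniform hypergraph. -/
def Uniform3 {n : ℕ} (H : Finset (Finset (Fin n))) : Prop :=
  ∀ e ∈ H, e.card = 3

/-- The matching number of `H` is at most `s`. -/
def MatchingAtMost {n : ℕ} (H : Finset (Finset (Fin n))) (s : ℕ) : Prop :=
  ∀ M ⊆ H, (M : Set (Finset (Fin n))).Pairwise (fun e f => Disjoint e f) → M.card ≤ s

/-- `H` contains a copy of the hypergraph with edge set `F`. -/
def HasCopy {α : Type*} [DecidableEq α] {n : ℕ}
    (F : Set (Finset α)) (H : Finset (Finset (Fin n))) : Prop :=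
  ∃ f : α → Fin n, Function.Injective f ∧ ∀ e ∈ F, e.image f ∈ H

/-- Number of edges of the Turán graph `T(n, r)`. -/
def turanEdges (n r : ℕ) : ℕ := (SimpleGraph.turanGraph n r).edgeFinset.card

theorem Finset.exists_pairwise_disjoint_forall_exists_not_disjoint {α : Type*} (F : Finset (Finset α)) :
    ∃ M ⊆ F, (M : Set (Finset α)).Pairwise Disjoint ∧
      ∀ e ∈ F, e.Nonempty → ∃ f ∈ M, ¬Disjoint e f := by
  classical
  obtain ⟨M, hM, hmax⟩ := exists_max_image
    (F.powerset.filter fun M : Finset (Finset α) => (M : Set (Finset α)).Pairwise Disjoint) card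
    ⟨∅, by simp⟩
  rw [mem_filter, mem_powerset] at hM
  refine ⟨M, hM.1, hM.2, fun e he hne => ?_⟩
  by_contra! hdisj
  have heM : e ∉ M := fun heM => hne.ne_empty (disjoint_self.1 (hdisj e heM))
  have hins : (insert e M).card ≤ M.card := hmax _ <| by
    rw [mem_filter, mem_powerset, coe_insert]
    exact ⟨insert_subset he hM.1,
      hM.2.insert fun f hf _ => ⟨hdisj f hf, (hdisj f hf).symm⟩⟩
  rw [card_insert_of_notMem heM] at hins
  omega

theorem card_le_sum_degH_of_forall_exists_mem {n : ℕ} {H F : Finset (Finset (Fin n))}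
    (hFH : F ⊆ H) (T : Finset (Fin n)) (hT : ∀ e ∈ F, ∃ v ∈ T, v ∈ e) :
    F.card ≤ ∑ v ∈ T, degH H v :=
  calc F.card ≤ (T.biUnion fun v => H.filter (v ∈ ·)).card := card_le_card fun e he => by
        obtain ⟨v, hv, hve⟩ := hT e he
        exact mem_biUnion.2 ⟨v, hv, mem_filter.2 ⟨hFH he, hve⟩⟩
    _ ≤ ∑ v ∈ T, degH H v := card_biUnion_le

theorem stmt_0 {n s : ℕ} (H : Finset (Finset (Fin n)))
    (hU : Uniform3 H) (hM : MatchingAtMost H s) :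
    (H.filter (fun e => e ⊆ Finset.univ.filter (fun v => degH H v ≤ 3 * s * n))).card
      ≤ 9 * s ^ 2 * n := by
  set B := univ.filter fun v => degH H v ≤ 3 * s * n
  set F := H.filter (· ⊆ B)
  have hFH : F ⊆ H := filter_subset _ _
  obtain ⟨M, hMF, hMdisj, hMmax⟩ := F.exists_pairwise_disjoint_forall_exists_not_disjoint
  have hVcard : (M.biUnion id).card ≤ 3 * s :=
    (card_biUnion_le_card_mul M id 3 fun e he => (hU e (hFH (hMF he))).le).trans
      (by have := hM M (hMF.trans hFH) hMdisj; omega)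
  have hVB : ∀ v ∈ M.biUnion id, degH H v ≤ 3 * s * n := fun v hv => by
    obtain ⟨f, hf, hvf⟩ := mem_biUnion.1 hv
    exact (mem_filter.1 ((mem_filter.1 (hMF hf)).2 hvf)).2
  have hcover : ∀ e ∈ F, ∃ v ∈ M.biUnion id, v ∈ e := fun e he => by
    have hne : e.Nonempty := card_pos.1 (by rw [hU e (hFH he)]; norm_num)
    obtain ⟨f, hf, hef⟩ := hMmax e he hne
    obtain ⟨v, hve, hvf⟩ := not_disjoint_iff.1 hef
    exact ⟨v, mem_biUnion.2 ⟨f, hf, hvf⟩, hve⟩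
  calc F.card ≤ ∑ v ∈ M.biUnion id, degH H v := card_le_sum_degH_of_forall_exists_mem hFH _ hcover
    _ ≤ (M.biUnion id).card * (3 * s * n) := sum_le_card_nsmul _ _ _ hVB
    _ ≤ 3 * s * (3 * s * n) := Nat.mul_le_mul_right _ hVcard
    _ = 9 * s ^ 2 * n := by ring
end

section
/- Let H be a 3-uniform hypergraph on vertex set [n] with matching number at most s, and suppose that the set A of vertices of degree at least 3sn+1 has exactly s elements. Then B = [n] \ A is a weakly independent set, i.e., no edge of H is entirely contained in B. -/
/-!
Suppose some edge `e` avoids the set `A` of high-degree vertices. Starting from the matching `{e}`,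
add one edge through each vertex `a ∈ A` in turn, avoiding the at most `3s` vertices already
covered or still reserved for the rest of `A`. Two vertices lie together in at most `n` edges, so
at most `3s · n` edges through `a` meet those vertices, while `a` has degree more than `3sn`.
This produces a matching of size `s + 1`.
-/

open Finset

variable {n : ℕ} {H : Finset (Finset (Fin n))}

theorem card_filter_mem_mem_le (hU : Uniform3 H) {a x : Fin n} (hax : a ≠ x) :
    #(H.filter fun f => a ∈ f ∧ x ∈ f) ≤ n := by
  have hsub : H.filter (fun f => a ∈ f ∧ x ∈ f) ⊆
      univ.image fun y => ({a, x, y} : Finset (Fin n)) := by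
    intro f hf
    obtain ⟨hfH, haf, hxf⟩ := mem_filter.mp hf
    have hax_sub : ({a, x} : Finset (Fin n)) ⊆ f :=
      insert_subset haf (singleton_subset_iff.mpr hxf)
    obtain ⟨y, hy⟩ : ∃ y, f \ {a, x} = {y} := card_eq_one.mp <| by
      rw [card_sdiff_of_subset hax_sub, hU f hfH, card_pair hax]
    refine mem_image.mpr ⟨y, mem_univ y, ?_⟩
    rw [← union_sdiff_of_subset hax_sub, hy]
    simp [insert_union]
  calc #(H.filter fun f => a ∈ f ∧ x ∈ f)
      ≤ #(univ.image fun y => ({a, x, y} : Finset (Fin n))) := card_le_card hsub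
    _ ≤ #(univ : Finset (Fin n)) := card_image_le
    _ = n := card_fin n

theorem exists_mem_disjoint_of_card_mul_lt_degH (hU : Uniform3 H) {a : Fin n}
    {T : Finset (Fin n)} (haT : a ∉ T) (hdeg : #T * n < degH H a) :
    ∃ f ∈ H, a ∈ f ∧ Disjoint f T := by
  by_contra! h
  have hcover :
      H.filter (a ∈ ·) ⊆ T.biUnion fun x => H.filter fun f => a ∈ f ∧ x ∈ f := by
    intro f hf
    obtain ⟨hfH, haf⟩ := mem_filter.mp hf
    obtain ⟨x, hxf, hxT⟩ := not_disjoint_iff.mp (h f hfH haf)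
    exact mem_biUnion.mpr ⟨x, hxT, mem_filter.mpr ⟨hfH, haf, hxf⟩⟩
  have hle : degH H a ≤ #T * n :=
    (card_le_card hcover).trans <| card_biUnion_le_card_mul _ _ _ fun x hx =>
      card_filter_mem_mem_le hU fun hax => haT (hax ▸ hx)
  omega

theorem card_biUnion_le_three_mul (hU : Uniform3 H) {M : Finset (Finset (Fin n))}
    (hMH : M ⊆ H) :
    #(M.biUnion id) ≤ 3 * #M := by
  rw [mul_comm]
  exact card_biUnion_le_card_mul _ _ _ fun e he => (hU e (hMH he)).le

/-- Adding an edge through a vertex of `S` moves that vertex from `S` to `M`, so `#M + #S`, and with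
it the degree bound, is the same at every greedy step. -/
theorem exists_matching_card_eq_add (hU : Uniform3 H) (S : Finset (Fin n))
    {M : Finset (Finset (Fin n))} (hMH : M ⊆ H)
    (hM : (M : Set (Finset (Fin n))).Pairwise Disjoint)
    (hSM : Disjoint S (M.biUnion id)) (hS : ∀ v ∈ S, 3 * (#M + #S - 1) * n < degH H v) :
    ∃ M' ⊆ H, (M' : Set (Finset (Fin n))).Pairwise Disjoint ∧ #M' = #M + #S := by
  induction S using Finset.induction_on generalizing M with
  | empty => exact ⟨M, hMH, hM, rfl⟩
  | insert a S haS ih =>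
    rw [card_insert_of_notMem haS, Nat.add_succ_sub_one] at hS
    rw [card_insert_of_notMem haS, add_comm #S 1, ← add_assoc]
    rw [disjoint_insert_left] at hSM
    set T := M.biUnion id ∪ S
    have haT : a ∉ T := by simp [T, hSM.1, haS]
    have hT : #T ≤ 3 * (#M + #S) :=
      (card_union_le _ _).trans <| by have := card_biUnion_le_three_mul hU hMH; omega
    obtain ⟨f, hfH, haf, hfT⟩ := exists_mem_disjoint_of_card_mul_lt_degH hU haT <|
      (Nat.mul_le_mul_right n hT).trans_lt (hS a (mem_insert_self a S))
    have hfM : Disjoint f (M.biUnion id) := hfT.mono_right subset_union_left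
    have hfS : Disjoint f S := hfT.mono_right subset_union_right
    have hf_notMem : f ∉ M := fun hf => hSM.1 (mem_biUnion.mpr ⟨f, hf, haf⟩)
    have hcard : #(insert f M) = #M + 1 := card_insert_of_notMem hf_notMem
    rw [← hcard]
    refine ih (insert_subset hfH hMH) ?_ ?_ ?_
    · rw [coe_insert]
      refine hM.insert fun g hg _ => ?_
      have hfg : Disjoint f g := hfM.mono_right (subset_biUnion_of_mem id hg)
      exact ⟨hfg, hfg.symm⟩
    · rw [biUnion_insert, disjoint_union_right]
      exact ⟨hfS.symm, hSM.2⟩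
    · intro v hv
      rw [hcard, add_right_comm, Nat.add_sub_cancel]
      exact hS v (mem_insert_of_mem hv)

theorem stmt_2 {n s : ℕ} (H : Finset (Finset (Fin n)))
    (hU : Uniform3 H) (hM : MatchingAtMost H s)
    (hA : (Finset.univ.filter (fun v => 3 * s * n + 1 ≤ degH H v)).card = s) :
    ∀ e ∈ H, ¬ e ⊆ Finset.univ \ Finset.univ.filter (fun v => 3 * s * n + 1 ≤ degH H v) := by
  intro e he heB
  set A := Finset.univ.filter (fun v => 3 * s * n + 1 ≤ degH H v)
  have hAe : Disjoint A (({e} : Finset (Finset (Fin n))).biUnion id) := by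
    rw [singleton_biUnion]
    exact (subset_sdiff.mp heB).2.symm
  obtain ⟨M, hMH, hMdisj, hMcard⟩ :=
    exists_matching_card_eq_add hU A (singleton_subset_iff.mpr he) (by simp) hAe fun v hv => by
      rw [card_singleton, hA, Nat.add_sub_cancel_left]
      exact (mem_filter.mp hv).2
  have := hM M hMH hMdisj
  rw [hMcard, card_singleton, hA] at this
  omega
end

section
/- For s ≥ 1, r ≥ 3 and n > r³, let G₁, …, Gₛ be simple graphs on vertex set [n] such that the family is (r−1)-star edge-colored K_r-free. If s ≤ r−2, then the sum of the numbers of edges of the Gᵢ is at most s·C(n,2); if s ≥ r−1, then this sum is at most s·t(n,r−1) + sn, where t(n,r−1) is the number of edges of the Turán graph T(n,r−1). -/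
open Finset

/-- The family `G` of graphs (colors) contains no `k`-star edge-colored `K_r`:
no `r` distinct vertices together with a symmetric coloring of the pairs such that
each pair is an edge in its color, exactly `k` colors are used, and each color
class forms a star. -/
def StarColoredCliqueFree (k r : ℕ) {n s : ℕ} (G : Fin s → SimpleGraph (Fin n)) : Prop :=
  ¬ ∃ (f : Fin r → Fin n) (c : Fin r → Fin r → Fin s),
      Function.Injective f ∧
      (∀ i j, c i j = c j i) ∧
      (∀ i j, i ≠ j → (G (c i j)).Adj (f i) (f j)) ∧
      ((Finset.univ.filter (fun p : Fin r × Fin r => p.1 ≠ p.2)).image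
        (fun p => c p.1 p.2)).card = k ∧
      (∀ a : Fin s, ∃ v : Fin r, ∀ i j, i ≠ j → c i j = a → i = v ∨ j = v)

/-!
Call vertices `x₀, …, x_k` with distinct colours `c₀, …, c_{k-1}` a nested clique if `x_i` is
joined in colour `c_i` to every later `x_j`; colouring `{x_i, x_j}` by `c_{min i j}` turns it into
a `k`-star edge-coloured `K_{k+1}`. If every vertex misses fewer than `n` of the edges of `k`
colour classes on `n` vertices, a nested clique can be built greedily. Deleting vertices of low
total degree one at a time therefore shows that `k` graphs without a nested clique have at most
`k (t(n, k) + n)` edges in total. For `s ≥ k = r - 1` graphs, apply this to the `k` heaviest ones;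
each remaining graph weighs at most their average.
-/

open SimpleGraph

namespace SimpleGraph

theorem card_edgeFinset_comap_succAbove_add_degree {n : ℕ} (G : SimpleGraph (Fin (n + 1)))
    [DecidableRel G.Adj] (v : Fin (n + 1)) :
    #(G.comap v.succAbove).edgeFinset + G.degree v = #G.edgeFinset := by
  let e : G.comap v.succAbove ≃g G.induce {v}ᶜ :=
    { toEquiv := finSuccAboveEquiv v, map_rel_iff' := Iff.rfl }
  rw [e.card_edgeFinset_eq, card_edgeFinset_induce_compl_singleton,
    card_edgeFinset_deleteIncidenceSet, Nat.sub_add_cancel (G.degree_le_card_edgeFinset v)]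

theorem degree_turanGraph_last (n r : ℕ) :
    (turanGraph (n + 1) r).degree (Fin.last n) = n - n / r := by
  have hcount : #{w ∈ range n | w % r = n % r} = n / r := by
    rcases r.eq_zero_or_pos with rfl | hr
    · simp
    · have := Nat.count_modEq_card n hr n
      rw [Nat.count_eq_card_filter_range] at this
      simp only [Nat.ModEq, lt_irrefl, if_false, add_zero] at this
      exact this
  simp only [← card_neighborFinset_eq_degree, neighborFinset_eq_filter, turanGraph_adj,
    Fin.val_last]
  rw [card_filter, Fin.sum_univ_eq_sum_range (fun w => if n % r ≠ w % r then 1 else 0) (n + 1),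
    sum_range_succ, ← card_filter]
  have hsplit := card_filter_add_card_filter_not (s := range n) (fun w => w % r = n % r)
  simp only [card_range, hcount] at hsplit
  simp only [ne_eq, not_true_eq_false, if_false, add_zero, eq_comm (a := n % r)]
  omega

end SimpleGraph

theorem turanEdges_succ (n r : ℕ) : turanEdges (n + 1) r = turanEdges n r + (n - n / r) := by
  rw [turanEdges, turanEdges, ← card_edgeFinset_comap_succAbove_add_degree _ (Fin.last n),
    degree_turanGraph_last, Fin.succAbove_last]
  -- `castSucc` preserves values, so the comap is `turanGraph n r` by definition
  rfl

section NestedClique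

variable {ι κ V W : Type*} (G : ι → SimpleGraph V)

def IsNestedClique {m : ℕ} (x : Fin (m + 1) → V) (c : Fin m → ι) : Prop :=
  Function.Injective c ∧
    ∀ (i : Fin m) (j : Fin (m + 1)), i.castSucc < j → (G (c i)).Adj (x i.castSucc) (x j)

def NestedCliqueFree (m : ℕ) : Prop :=
  ∀ (x : Fin (m + 1) → V) (c : Fin m → ι), ¬ IsNestedClique G x c

variable {G}

theorem IsNestedClique.injective {m : ℕ} {x : Fin (m + 1) → V} {c : Fin m → ι}
    (h : IsNestedClique G x c) : Function.Injective x := by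
  have hne : ∀ i j, i < j → x i ≠ x j := fun i j hij => by
    obtain ⟨a, rfl⟩ := Fin.exists_castSucc_eq.2 (Fin.ne_last_of_lt hij)
    exact (h.2 a j hij).ne
  intro i j hx
  rcases lt_trichotomy i j with hij | rfl | hij
  · exact absurd hx (hne i j hij)
  · rfl
  · exact absurd hx.symm (hne j i hij)

theorem IsNestedClique.cons {m : ℕ} {x : Fin (m + 1) → V} {c : Fin m → ι}
    (h : IsNestedClique G x c) {x₀ : V} {a : ι} (ha : ∀ i, c i ≠ a)
    (hadj : ∀ j, (G a).Adj x₀ (x j)) :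
    IsNestedClique G (Fin.cons x₀ x : Fin (m + 2) → V) (Fin.cons a c : Fin (m + 1) → ι) := by
  refine ⟨Fin.cons_injective_iff.2 ⟨fun ⟨i, hi⟩ => ha i hi, h.1⟩, fun i j hij => ?_⟩
  obtain ⟨j, rfl⟩ := Fin.exists_succ_eq.2 (ne_of_gt (lt_of_le_of_lt (Fin.zero_le _) hij))
  cases i using Fin.cases with
  | zero => simpa using hadj j
  | succ i => simpa [← Fin.succ_castSucc] using h.2 i j (by simpa [← Fin.succ_castSucc] using hij)

theorem NestedCliqueFree.comp {m : ℕ} (h : NestedCliqueFree G m) {f : κ → ι}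
    (hf : Function.Injective f) : NestedCliqueFree (G ∘ f) m :=
  fun x c hxc => h x (f ∘ c) ⟨hf.comp hxc.1, hxc.2⟩

theorem NestedCliqueFree.comap {m : ℕ} (h : NestedCliqueFree G m) (φ : W → V) :
    NestedCliqueFree (fun i => (G i).comap φ) m :=
  fun x c hxc => h (φ ∘ x) c hxc

end NestedClique

/-- Greedy construction: the pair `(x₀, a)` of largest colour-`a` degree inside `U` starts the
clique, and the hypothesis survives on the colour-`a` neighbourhood of `x₀` with `a` removed. -/
theorem exists_isNestedClique_of_sum_card_nonadj_lt {ι V : Type*} [DecidableEq ι]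
    (G : ι → SimpleGraph V) [∀ i, DecidableRel (G i).Adj] :
    ∀ (m : ℕ) (A : Finset ι) (U : Finset V), #A = m → U.Nonempty →
      (∀ y ∈ U, ∑ i ∈ A, #{z ∈ U | ¬(G i).Adj y z} < #U) →
      ∃ (x : Fin (m + 1) → V) (c : Fin m → ι),
        IsNestedClique G x c ∧ (∀ j, x j ∈ U) ∧ ∀ i, c i ∈ A
  | 0, _, _, _, ⟨y, hy⟩, _ =>
    ⟨fun _ => y, Fin.elim0, ⟨fun i => i.elim0, fun i => i.elim0⟩, fun _ => hy, fun i => i.elim0⟩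
  | m + 1, A, U, hA, ⟨y₀, hy₀⟩, hU => by
    obtain ⟨⟨x₀, a⟩, hxa, hmax⟩ := exists_max_image (U ×ˢ A)
      (fun p => #{z ∈ U | (G p.2).Adj p.1 z})
      ⟨(y₀, _), mem_product.2 ⟨hy₀, (card_pos.1 (hA ▸ m.succ_pos)).choose_spec⟩⟩
    rw [mem_product] at hxa
    set U' := {z ∈ U | (G a).Adj x₀ z}
    have hrest : ∀ y ∈ U, ∑ i ∈ A.erase a, #{z ∈ U | ¬(G i).Adj y z} < #U' := fun y hy => by
      have hdeg := hmax (y, a) (mem_product.2 ⟨hy, hxa.2⟩)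
      have hsplit := card_filter_add_card_filter_not (s := U) (fun z => (G a).Adj y z)
      have hsum := hU y hy
      rw [← add_sum_erase A _ hxa.2] at hsum
      dsimp only at hdeg hsum hsplit
      omega
    have hU'U : U' ⊆ U := filter_subset _ _
    obtain ⟨x, c, hxc, hxU', hcA⟩ :=
      exists_isNestedClique_of_sum_card_nonadj_lt G m (A.erase a) U'
      (by rw [card_erase_of_mem hxa.2, hA]; rfl)
      (card_pos.1 (lt_of_le_of_lt (Nat.zero_le _) (hrest y₀ hy₀)))
      (fun y hy => lt_of_le_of_lt
        (sum_le_sum fun i _ => card_le_card (filter_subset_filter _ hU'U)) (hrest y (hU'U hy)))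
    refine ⟨Fin.cons x₀ x, Fin.cons a c,
      hxc.cons (fun i => ne_of_mem_erase (hcA i)) (fun j => (mem_filter.1 (hxU' j)).2),
      Fin.cases hxa.1 (fun j => hU'U (hxU' j)),
      Fin.cases hxa.2 (fun i => mem_of_mem_erase (hcA i))⟩

/-- Delete a vertex of small total degree if there is one (the Turán graph loses
`n - n / m` edges per colour when its last vertex is deleted); otherwise every vertex misses fewer
than `n + 1` edges in total, and the greedy construction produces a nested clique. -/
theorem sum_card_edgeFinset_le_of_nestedCliqueFree {ι : Type*} [Fintype ι] [DecidableEq ι] :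
    ∀ {n : ℕ} (H : ι → SimpleGraph (Fin n)) [∀ i, DecidableRel (H i).Adj],
      NestedCliqueFree H (Fintype.card ι) →
      ∑ i, #(H i).edgeFinset ≤ Fintype.card ι * (turanEdges n (Fintype.card ι) + n)
  | 0, H, _, _ => by
    have hempty (i : ι) : #(H i).edgeFinset = 0 := by
      simpa using (H i).card_edgeFinset_le_card_choose_two
    simp [hempty]
  | n + 1, H, _, hH => by
    set m := Fintype.card ι
    by_cases hlow : ∃ v, ∑ i, (H i).degree v ≤ m * (n - n / m) + m
    · obtain ⟨v, hv⟩ := hlow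
      have ih := sum_card_edgeFinset_le_of_nestedCliqueFree _ (hH.comap v.succAbove)
      calc ∑ i, #(H i).edgeFinset
          = ∑ i, #((H i).comap v.succAbove).edgeFinset + ∑ i, (H i).degree v := by
            simp only [← sum_add_distrib, card_edgeFinset_comap_succAbove_add_degree]
        _ ≤ m * (turanEdges n m + n) + (m * (n - n / m) + m) := add_le_add ih hv
        _ = m * (turanEdges (n + 1) m + (n + 1)) := by rw [turanEdges_succ]; ring
    · push Not at hlow
      obtain ⟨x, c, hxc, -⟩ := exists_isNestedClique_of_sum_card_nonadj_lt H m univ univ rfl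
        univ_nonempty fun y _ => by
          have hsplit : ∑ i, #{z | ¬(H i).Adj y z} + ∑ i, (H i).degree y = m * (n + 1) := by
            simp only [← sum_add_distrib, ← card_neighborFinset_eq_degree, neighborFinset_eq_filter]
            simp [add_comm, card_filter_add_card_filter_not, m]
          have hdiv : m * (n / m) ≤ n := Nat.mul_div_le n m
          have hy := hlow y
          rw [Nat.mul_sub] at hy
          rw [mul_add_one] at hsplit
          rw [card_univ, Fintype.card_fin]
          omega
      exact (hH x c hxc).elim

/-- Colouring the pair `{i, j}` by `c (min i j)` makes each colour class a star centred at the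
smaller endpoint. -/
theorem nestedCliqueFree_of_starColoredCliqueFree {n s k : ℕ} {G : Fin s → SimpleGraph (Fin n)}
    (h : StarColoredCliqueFree (k + 1) (k + 2) G) : NestedCliqueFree G (k + 1) := by
  intro x c hxc
  let d : Fin (k + 2) → Fin s := Fin.lastCases (c 0) c
  have hmin : ∀ i j : Fin (k + 2), i ≠ j → ∃ a, a.castSucc = min i j ∧ d (min i j) = c a := by
    intro i j hij
    obtain ⟨a, ha⟩ := Fin.exists_castSucc_eq.2 (Fin.ne_last_of_lt (min_lt_max.2 hij))
    exact ⟨a, ha, by simp [d, ← ha]⟩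
  refine h ⟨x, fun i j => d (min i j), hxc.injective,
    fun i j => by beta_reduce; rw [min_comm], ?_, ?_, ?_⟩
  · intro i j hij
    beta_reduce
    wlog hlt : i < j generalizing i j
    · simpa only [min_comm] using (this j i hij.symm (lt_of_le_of_ne (not_lt.1 hlt) hij.symm)).symm
    obtain ⟨a, ha, hd⟩ := hmin i j hij
    rw [min_eq_left hlt.le] at ha hd
    rw [min_eq_left hlt.le, hd, ← ha]
    exact hxc.2 a j (ha ▸ hlt)
  · have himage : ({p : Fin (k + 2) × Fin (k + 2) | p.1 ≠ p.2} : Finset _).image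
        (fun p => d (min p.1 p.2)) = univ.image c := by
      ext b
      simp only [mem_image, mem_filter, mem_univ, true_and, Prod.exists]
      constructor
      · rintro ⟨i, j, hij, rfl⟩
        obtain ⟨a, -, hd⟩ := hmin i j hij
        exact ⟨a, hd.symm⟩
      · rintro ⟨a, rfl⟩
        exact ⟨a.castSucc, a.succ, Fin.castSucc_lt_succ.ne,
          by simp [d, min_eq_left Fin.castSucc_lt_succ.le]⟩
    rw [himage, card_image_of_injective _ hxc.1, card_univ, Fintype.card_fin]
  · intro b
    by_cases hb : ∃ a, c a = b
    · obtain ⟨a, rfl⟩ := hb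
      refine ⟨a.castSucc, fun i j hij hc => ?_⟩
      obtain ⟨a', ha', hd⟩ := hmin i j hij
      beta_reduce at hc
      rw [hd] at hc
      rw [hxc.1 hc] at ha'
      rcases min_choice i j with hm | hm
      · exact Or.inl (hm ▸ ha').symm
      · exact Or.inr (hm ▸ ha').symm
    · refine ⟨0, fun i j hij hc => (hb ?_).elim⟩
      obtain ⟨a, -, hd⟩ := hmin i j hij
      exact ⟨a, hd.symm.trans hc⟩

/-- Take a `k`-subset `C` of maximal weight: exchanging shows that every `j ∉ C` weighs at most
the average over `C`, hence at most `B`. -/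
theorem sum_le_card_mul_of_forall_card_eq {ι : Type*} [Fintype ι] [DecidableEq ι] (f : ι → ℕ)
    {k B : ℕ} (hk : 0 < k) (hkι : k ≤ Fintype.card ι)
    (h : ∀ C : Finset ι, #C = k → ∑ i ∈ C, f i ≤ k * B) : ∑ i, f i ≤ Fintype.card ι * B := by
  obtain ⟨C, hC, hmax⟩ := exists_max_image (powersetCard k univ) (fun C => ∑ i ∈ C, f i)
    (powersetCard_nonempty.2 (by rwa [card_univ]))
  rw [mem_powersetCard] at hC
  have hout : ∀ j ∉ C, f j ≤ B := fun j hj => by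
    have hle : ∀ c ∈ C, f j ≤ f c := fun c hc => by
      have hswap := hmax (insert j (C.erase c)) <| mem_powersetCard.2 ⟨subset_univ _, by
        rw [card_insert_of_notMem fun h => hj (mem_of_mem_erase h), card_erase_of_mem hc, hC.2]
        omega⟩
      rw [sum_insert fun h => hj (mem_of_mem_erase h), ← sum_erase_add C f hc] at hswap
      omega
    have hsum := (card_nsmul_le_sum C f (f j) hle).trans (h C hC.2)
    rw [hC.2, smul_eq_mul] at hsum
    exact Nat.le_of_mul_le_mul_left hsum hk
  calc ∑ i, f i = ∑ i ∈ C, f i + ∑ i ∈ Cᶜ, f i := (sum_add_sum_compl C f).symm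
    _ ≤ k * B + #Cᶜ • B :=
      add_le_add (h C hC.2) (sum_le_card_nsmul _ _ _ fun j hj => hout j (mem_compl.1 hj))
    _ = Fintype.card ι * B := by
      rw [card_compl, hC.2, smul_eq_mul, ← add_mul, Nat.add_sub_cancel' hkι]

theorem stmt_3_general {n s r : ℕ} (hr : 3 ≤ r)
    (G : Fin s → SimpleGraph (Fin n)) [∀ i, DecidableRel (G i).Adj]
    (hfree : StarColoredCliqueFree (r - 1) r G) :
    (s ≤ r - 2 → ∑ i, (G i).edgeFinset.card ≤ s * n.choose 2) ∧
    (r - 1 ≤ s → ∑ i, (G i).edgeFinset.card ≤ s * turanEdges n (r - 1) + s * n) := by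
  refine ⟨fun _ => ?_, fun hrs => ?_⟩
  · simpa using sum_le_sum fun i (_ : i ∈ univ) => (G i).card_edgeFinset_le_card_choose_two
  obtain ⟨k, rfl⟩ : ∃ k, r = k + 2 := ⟨r - 2, by omega⟩
  rw [show k + 2 - 1 = k + 1 by omega] at hfree hrs ⊢
  have hnest := nestedCliqueFree_of_starColoredCliqueFree hfree
  have hsubfamily (C : Finset (Fin s)) (hC : #C = k + 1) :
      ∑ i ∈ C, #(G i).edgeFinset ≤ (k + 1) * (turanEdges n (k + 1) + n) := by
    have hcard : Fintype.card C = k + 1 := by simpa using hC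
    have hsub := sum_card_edgeFinset_le_of_nestedCliqueFree (fun i : C => G i)
      (hcard ▸ hnest.comp Subtype.val_injective)
    rwa [hcard, sum_coe_sort C (fun i => #(G i).edgeFinset)] at hsub
  simpa [mul_add] using
    sum_le_card_mul_of_forall_card_eq _ k.succ_pos (by simpa using hrs) hsubfamily

theorem stmt_3 {n s r : ℕ} (hs : 1 ≤ s) (hr : 3 ≤ r) (hn : r ^ 3 < n)
    (G : Fin s → SimpleGraph (Fin n)) [∀ i, DecidableRel (G i).Adj]
    (hfree : StarColoredCliqueFree (r - 1) r G) :
    (s ≤ r - 2 → ∑ i, (G i).edgeFinset.card ≤ s * n.choose 2) ∧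
    (r - 1 ≤ s → ∑ i, (G i).edgeFinset.card ≤ s * turanEdges n (r - 1) + s * n) :=
  stmt_3_general hr G hfree
end

section
/- Let t ≥ 3 and let F_{P,t} be the 3-graph on vertex set A ∪ [t] with A = {a₁,…,a_{t−1}}, whose edges are all triples {aᵢ, i, j} with 1 ≤ i < j ≤ t. Then every strong red-blue coloring of F_{P,t} uses exactly t−1 red vertices; in particular q(F_{P,t}) = t−1. -/
open Finset

/-- Edge set of the 3-graph `F_{P,t}` on `A ∪ [t]`, `A = Fin (t-1)`:
edges are `{aᵢ, i, j}` for `1 ≤ i < j ≤ t`. -/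
def FPtEdges (t : ℕ) : Set (Finset (Fin (t - 1) ⊕ Fin t)) :=
  { e | ∃ (i : Fin (t - 1)) (j : Fin t), (i : ℕ) < (j : ℕ) ∧
      e = {Sum.inl i, Sum.inr (Fin.castLE (Nat.sub_le t 1) i), Sum.inr j} }

/-!
Index both parts from `0`, so that the edges are `{aᵢ, i, j}` with `i < j`. Two red vertices
`j < k` of `[t]` would lie in the common edge `{a_j, j, k}`, so at most one vertex of `[t]` is red.
If a vertex `j ≥ 1` were red, the edge `{a₀, 0, j}` would make `a₀` and `0` blue, and then the edge
`{a₀, 0, k}` would make every `k ≥ 1` red, and `t ≥ 3` gives two such `k`. Hence all of `[t]` but possibly `0` is blue, and the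
edge `{aᵢ, i, i + 1}` shows that each of the `t - 1` pairs `{aᵢ, i}` has exactly one red vertex.
These pairs cover every vertex except the blue `t - 1`.
-/

/-- A strong red-blue coloring, encoded by its set `R` of red vertices. -/
def IsStrongColoring {V : Type*} [DecidableEq V] (E : Set (Finset V)) (R : Finset V) : Prop :=
  ∀ e ∈ E, (e.filter (fun v => v ∈ R)).card = 1

theorem card_filter_mem_triple_eq_one_iff {V : Type*} [DecidableEq V] {x y z : V}
    (hxy : x ≠ y) (hxz : x ≠ z) (hyz : y ≠ z) (R : Finset V) :
    (({x, y, z} : Finset V).filter (fun v => v ∈ R)).card = 1 ↔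
      (x ∈ R ∧ y ∉ R ∧ z ∉ R) ∨ (x ∉ R ∧ y ∈ R ∧ z ∉ R) ∨ (x ∉ R ∧ y ∉ R ∧ z ∈ R) := by
  by_cases hx : x ∈ R <;> by_cases hy : y ∈ R <;> by_cases hz : z ∈ R <;>
    simp [filter_insert, filter_singleton, hx, hy, hz, hxy, hxz, hyz]

namespace FPtEdges

variable {t : ℕ} {R : Finset (Fin (t - 1) ⊕ Fin t)}

theorem exactly_one_red (hR : IsStrongColoring (FPtEdges t) R) (i : Fin (t - 1)) (j : Fin t)
    (hij : (i : ℕ) < j) :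
    (Sum.inl i ∈ R ∧ Sum.inr (Fin.castLE (Nat.sub_le t 1) i) ∉ R ∧ Sum.inr j ∉ R) ∨
    (Sum.inl i ∉ R ∧ Sum.inr (Fin.castLE (Nat.sub_le t 1) i) ∈ R ∧ Sum.inr j ∉ R) ∨
    (Sum.inl i ∉ R ∧ Sum.inr (Fin.castLE (Nat.sub_le t 1) i) ∉ R ∧ Sum.inr j ∈ R) := by
  have hne : Fin.castLE (Nat.sub_le t 1) i ≠ j := Fin.ne_of_lt hij
  exact (card_filter_mem_triple_eq_one_iff (by simp) (by simp) (by simpa using hne) R).mp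
    (hR _ ⟨i, j, hij, rfl⟩)

theorem isStrongColoring_image_inl :
    IsStrongColoring (FPtEdges t) ((univ : Finset (Fin (t - 1))).image Sum.inl) := by
  rintro e ⟨i, j, hij, rfl⟩
  simp [filter_insert, filter_singleton]

theorem eq_of_inr_mem (hR : IsStrongColoring (FPtEdges t) R) {j k : Fin t}
    (hj : Sum.inr j ∈ R) (hk : Sum.inr k ∈ R) : j = k := by
  wlog hjk : j < k generalizing j k
  · rcases (not_lt.mp hjk).lt_or_eq with h | h
    · exact (this hk hj h).symm
    · exact h.symm
  have := exactly_one_red hR ⟨j, by omega⟩ k hjk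
  tauto

theorem inr_notMem (hR : IsStrongColoring (FPtEdges t) R) (ht : 3 ≤ t) {j : Fin t}
    (hj : 0 < (j : ℕ)) : Sum.inr j ∉ R := by
  intro hjR
  let a₀ : Fin (t - 1) := ⟨0, by omega⟩
  obtain ⟨k, hk, hkj⟩ : ∃ k : Fin t, 0 < (k : ℕ) ∧ k ≠ j :=
    if h : (j : ℕ) = 1 then ⟨⟨2, by omega⟩, by simp, fun e => by simp [← e] at h⟩
    else ⟨⟨1, by omega⟩, by simp, fun e => h (by simp [← e])⟩
  have hj₀ := exactly_one_red hR a₀ j hj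
  have hk₀ := exactly_one_red hR a₀ k hk
  have hkR : Sum.inr k ∈ R := by tauto
  exact hkj (eq_of_inr_mem hR hkR hjR)

theorem inl_mem_iff (hR : IsStrongColoring (FPtEdges t) R) (ht : 3 ≤ t) (i : Fin (t - 1)) :
    Sum.inl i ∈ R ↔ Sum.inr (Fin.castLE (Nat.sub_le t 1) i) ∉ R := by
  have hedge := exactly_one_red hR i ⟨i + 1, by omega⟩ (by simp)
  have hnext := inr_notMem hR ht (j := ⟨i + 1, by omega⟩) (by simp)
  tauto

theorem card_eq_of_isStrongColoring (hR : IsStrongColoring (FPtEdges t) R) (ht : 3 ≤ t) :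
    R.card = t - 1 := by
  let redOfPair : Fin (t - 1) → Fin (t - 1) ⊕ Fin t := fun i =>
    if Sum.inl i ∈ R then Sum.inl i else Sum.inr (Fin.castLE (Nat.sub_le t 1) i)
  suffices (univ : Finset (Fin (t - 1))).card = R.card by simpa using this.symm
  refine card_nbij redOfPair (fun i _ => ?_) (fun i _ i' _ h => ?_) (fun v hv => ?_)
  · have := inl_mem_iff hR ht i
    simp only [redOfPair]
    split_ifs <;> simp_all
  · simp only [redOfPair] at h
    split_ifs at h <;> simpa [Fin.ext_iff] using h
  · rw [mem_coe] at hv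
    rcases v with i | j
    · exact ⟨i, by simp, by simp [redOfPair, hv]⟩
    · have hj : (j : ℕ) = 0 := by
        by_contra hj
        exact inr_notMem hR ht (Nat.pos_of_ne_zero hj) hv
      let i : Fin (t - 1) := ⟨j, by omega⟩
      have hji : Fin.castLE (Nat.sub_le t 1) i = j := rfl
      refine ⟨i, by simp, ?_⟩
      have hi : Sum.inl i ∉ R := fun h => (inl_mem_iff hR ht i).mp h (hji ▸ hv)
      simp [redOfPair, hi, hji]

end FPtEdges

theorem stmt_5 (t : ℕ) (ht : 3 ≤ t) :
    (∃ R : Finset (Fin (t - 1) ⊕ Fin t),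
      ∀ e ∈ FPtEdges t, (e.filter (fun v => v ∈ R)).card = 1) ∧
    (∀ R : Finset (Fin (t - 1) ⊕ Fin t),
      (∀ e ∈ FPtEdges t, (e.filter (fun v => v ∈ R)).card = 1) → R.card = t - 1) :=
  ⟨⟨_, FPtEdges.isStrongColoring_image_inl⟩,
    fun _ hR => FPtEdges.card_eq_of_isStrongColoring hR ht⟩
end

section
/- Let t ≥ 3 and let F_{P,t} be the 3-graph on A ∪ [t], A = {a₁,…,a_{t−1}}, with edges {aᵢ, i, j} for 1 ≤ i < j ≤ t. Let H_A be the 3-graph on U ∪ V with |U| = s, |V| = n−s, whose edges are all triples with exactly one vertex in U and two in V. If s ≤ t−2, then H_A is F_{P,t}-free and has matching number at most s and exactly s·C(n−s,2) edges. -/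
/-!
Every edge of `H(n,s)` meets the set `A` of the first `s` vertices in exactly one vertex. Hence
disjoint edges meet `A` in distinct vertices, and an edge is determined by its vertex in `A`
together with a pair outside `A`.

A copy of `F_{P,t}` pulls `A` back to a set `X` of at most `s` vertices meeting every edge of
`F_{P,t}` exactly once. If `t ∈ X`, the edges `{a₁, 1, t}` and `{a₂, 2, t}` keep `a₁, 1, 2` out of
`X`, and then the edge `{a₁, 1, 2}` misses `X`. So `t ∉ X`, and the edges `{aᵢ, i, t}` force `X`
to meet each of the `t - 1` disjoint pairs `{aᵢ, i}`, whence `t - 1 ≤ s`.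
-/
open Finset

/-- The 3-graph `H(n,s)`: all triples with exactly one vertex in the set
`A` of the first `s` vertices (and two in `B`). -/
def Hns (n s : ℕ) : Finset (Finset (Fin n)) :=
  Finset.univ.filter (fun e => e.card = 3 ∧ (e.filter (fun v : Fin n => (v : ℕ) < s)).card = 1)

section FilterCard

variable {α : Type*} {p : α → Prop} [DecidablePred p]

lemma exists_of_card_filter_eq_one {s : Finset α} (h : #(s.filter p) = 1) : ∃ a ∈ s, p a :=
  filter_nonempty_iff.1 (card_pos.1 (by omega))

lemma not_of_card_filter_eq_one {s : Finset α} (h : #(s.filter p) = 1) {a b : α} (ha : a ∈ s)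
    (hb : b ∈ s) (hab : a ≠ b) (hpa : p a) : ¬ p b := fun hpb =>
  hab (card_le_one.1 h.le a (mem_filter.2 ⟨ha, hpa⟩) b (mem_filter.2 ⟨hb, hpb⟩))

variable [Fintype α] [DecidableEq α]

lemma card_le_card_filter_of_pairwiseDisjoint {ι : Type*} {I : Finset ι} {g : ι → Finset α}
    (hg : (I : Set ι).PairwiseDisjoint g) (hp : ∀ i ∈ I, ((g i).filter p).Nonempty) :
    #I ≤ #{a | p a} :=
  (card_le_card_biUnion (hg.mono fun _ ↦ filter_subset _ _) hp).trans <|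
    card_le_card <| biUnion_subset.2 fun _ _ ↦ filter_subset_filter p (subset_univ _)

theorem card_filter_card_filter_eq (i j : ℕ) :
    #{e : Finset α | #(e.filter p) = i ∧ #(e.filter (¬ p ·)) = j} =
      (#{a | p a}).choose i * (#{a | ¬ p a}).choose j := by
  have split_union {x y : Finset α} (hx : x ⊆ ({a | p a} : Finset α))
      (hy : y ⊆ ({a | ¬ p a} : Finset α)) :
      (x ∪ y).filter p = x ∧ (x ∪ y).filter (¬ p ·) = y := by
    have hx' : ∀ a ∈ x, p a := fun a ha => (mem_filter.1 (hx ha)).2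
    have hy' : ∀ a ∈ y, ¬ p a := fun a ha => (mem_filter.1 (hy ha)).2
    simp [filter_union, filter_true_of_mem hx', filter_false_of_mem hy',
      filter_false_of_mem fun a ha => not_not.2 (hx' a ha), filter_true_of_mem hy']
  rw [← card_powersetCard, ← card_powersetCard, ← card_product]
  refine card_nbij' (fun e => (e.filter p, e.filter (¬ p ·))) (fun x => x.1 ∪ x.2) ?_ ?_ ?_ ?_
  · intro e he
    simp_all [filter_subset_filter]
  · rintro ⟨x, y⟩ hxy
    simp only [coe_product, Set.mem_prod, mem_coe, mem_powersetCard] at hxy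
    simp [split_union hxy.1.1 hxy.2.1, hxy]
  · intro e _
    exact filter_union_filter_not_eq p e
  · rintro ⟨x, y⟩ hxy
    simp only [coe_product, Set.mem_prod, mem_coe, mem_powersetCard] at hxy
    simp [split_union hxy.1.1 hxy.2.1]

end FilterCard

lemma card_filter_val_lt_le (n s : ℕ) : #{v : Fin n | (v : ℕ) < s} ≤ s :=
  Fin.card_filter_val_lt.trans_le (min_le_right n s)

lemma card_filter_val_lt {n s : ℕ} (hsn : s ≤ n) : #{v : Fin n | (v : ℕ) < s} = s := by
  rw [Fin.card_filter_val_lt, min_eq_right hsn]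

lemma card_filter_not_val_lt {n s : ℕ} (hsn : s ≤ n) : #{v : Fin n | ¬ (v : ℕ) < s} = n - s := by
  have := card_filter_add_card_filter_not (s := (univ : Finset (Fin n))) (fun v => (v : ℕ) < s)
  rw [card_filter_val_lt hsn, card_univ, Fintype.card_fin] at this
  omega

lemma Hns_eq_filter (n s : ℕ) :
    Hns n s = ({e : Finset (Fin n) | #(e.filter (fun v : Fin n => (v : ℕ) < s)) = 1 ∧
      #(e.filter (fun v : Fin n => ¬ (v : ℕ) < s)) = 2} : Finset _) := by
  ext e
  have := card_filter_add_card_filter_not (s := e) (fun v : Fin n => (v : ℕ) < s)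
  simp only [Hns, mem_filter, mem_univ, true_and]
  omega

lemma card_Hns {n s : ℕ} (hsn : s ≤ n) : #(Hns n s) = s * (n - s).choose 2 := by
  rw [Hns_eq_filter, card_filter_card_filter_eq, card_filter_val_lt hsn,
    card_filter_not_val_lt hsn, Nat.choose_one_right]

lemma matchingAtMost_Hns (n s : ℕ) : MatchingAtMost (Hns n s) s := by
  intro M hM hdisj
  refine le_trans ?_ (card_filter_val_lt_le n s)
  exact card_le_card_filter_of_pairwiseDisjoint (g := id) hdisj fun e he =>
    card_pos.1 (by simp [(mem_filter.1 (hM he)).2.2])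

lemma sub_one_le_card_filter_of_FPtEdges {t : ℕ} (ht : 3 ≤ t) (P : Fin (t - 1) ⊕ Fin t → Prop)
    [DecidablePred P] (hP : ∀ e ∈ FPtEdges t, #(e.filter P) = 1) : t - 1 ≤ #{x | P x} := by
  let last : Fin t := ⟨t - 1, by omega⟩
  have hlast : ¬ P (.inr last) := by
    intro h
    let a₀ : Fin (t - 1) := ⟨0, by omega⟩
    let a₁ : Fin (t - 1) := ⟨1, by omega⟩
    let b₁ : Fin t := ⟨1, by omega⟩
    have e₀ := hP _ ⟨a₀, last, by simp [a₀, last]; omega, rfl⟩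
    have e₁ := hP _ ⟨a₁, last, by simp [a₁, last]; omega, rfl⟩
    have e₀₁ := hP _ ⟨a₀, b₁, by simp [a₀, b₁], rfl⟩
    obtain ⟨x, hx, hPx⟩ := exists_of_card_filter_eq_one e₀₁
    simp only [mem_insert, mem_singleton] at hx
    rcases hx with rfl | rfl | rfl
    · exact not_of_card_filter_eq_one e₀ (by simp) (by simp) (by simp) h hPx
    · refine not_of_card_filter_eq_one e₀ (by simp) (by simp) ?_ h hPx
      simp [Fin.ext_iff, a₀, last]; omega
    · refine not_of_card_filter_eq_one e₁ (by simp) (by simp [Fin.ext_iff, a₁, b₁]) ?_ h hPx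
      simp [Fin.ext_iff, b₁, last]; omega
  calc t - 1 = #(univ : Finset (Fin (t - 1))) := by simp
    _ ≤ #{x | P x} := by
      refine card_le_card_filter_of_pairwiseDisjoint
        (g := fun i => {.inl i, .inr (Fin.castLE (Nat.sub_le t 1) i)}) ?_ ?_
      · intro i _ j _ hij
        simpa [Fin.ext_iff, eq_comm] using hij
      · intro i _
        obtain ⟨x, hx, hPx⟩ :=
          exists_of_card_filter_eq_one (hP _ ⟨i, last, by simp [last], rfl⟩)
        simp only [mem_insert, mem_singleton] at hx
        rcases hx with rfl | rfl | rfl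
        · exact ⟨_, mem_filter.2 ⟨by simp, hPx⟩⟩
        · exact ⟨_, mem_filter.2 ⟨by simp, hPx⟩⟩
        · exact absurd hPx hlast

lemma card_filter_eq_one_of_image_mem_Hns {α : Type*} [DecidableEq α] {n s : ℕ} {f : α → Fin n}
    (hf : Function.Injective f) {e : Finset α} (he : e.image f ∈ Hns n s) :
    #(e.filter fun x => (f x : ℕ) < s) = 1 := by
  rw [← card_image_of_injective _ hf, ← filter_image (p := fun v : Fin n => (v : ℕ) < s)]
  exact (mem_filter.1 he).2.2

lemma not_hasCopy_FPtEdges_Hns {n s t : ℕ} (ht : 3 ≤ t) (hst : s ≤ t - 2) :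
    ¬ HasCopy (FPtEdges t) (Hns n s) := by
  rintro ⟨f, hf, hcopy⟩
  have hcover := sub_one_le_card_filter_of_FPtEdges ht (fun x => (f x : ℕ) < s)
    fun e he => card_filter_eq_one_of_image_mem_Hns hf (hcopy e he)
  have hA : #{x | (f x : ℕ) < s} ≤ s := calc
    _ = #(({x | (f x : ℕ) < s} : Finset _).image f) := (card_image_of_injective _ hf).symm
    _ ≤ #{v : Fin n | (v : ℕ) < s} := card_le_card fun v hv => by
      obtain ⟨x, hx, rfl⟩ := mem_image.1 hv
      simpa using hx
    _ ≤ s := card_filter_val_lt_le n s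
  omega

theorem stmt_6 {n s t : ℕ} (ht : 3 ≤ t) (hst : s ≤ t - 2) (hsn : s ≤ n) :
    ¬ HasCopy (FPtEdges t) (Hns n s) ∧ MatchingAtMost (Hns n s) s ∧
    (Hns n s).card = s * (n - s).choose 2 :=
  ⟨not_hasCopy_FPtEdges_Hns ht hst, matchingAtMost_Hns n s, card_Hns hsn⟩
end

section
/- Let t ≥ 3 and let F_{P,t} be the 3-graph on A ∪ [t], A = {a₁,…,a_{t−1}}, with edges {aᵢ, i, j} for 1 ≤ i < j ≤ t. Let H_B be the 3-graph on U ∪ V with |U| = s, |V| = n−s, whose edges are all triples {u,v,w} with u ∈ U and vw an edge of a fixed Turán graph T(n−s, t−1) on V. Then H_B is F_{P,t}-free, has matching number at most s, and has exactly s·t(n−s,t−1) edges. -/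
/-!
The shadow of `F_{P,t}` contains a clique of size `t + 1` on `{a₁} ∪ [t]`: `a₁` lies with every
`j` in one of the edges `{a₁, 1, j}`, and `i < j` lie together in `{aᵢ, i, j}`. The shadow of `H_B`
is properly `t`-coloured by giving `U` one colour and `V` the `t - 1` classes of the Turán graph,
so it has no such clique, while an injective copy of `F_{P,t}` maps shadow edges to shadow edges.

Every edge of `H_B` meets `U`, so pairwise disjoint edges meet `U` in distinct vertices. Since the
vertices of `U` are isolated in the Turán graph, an edge `{u} ∪ e` of `H_B` determines both `u`
and `e`, which gives the edge count.
-/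

open Finset

/-- The 3-graph `H_B`: vertices `< s` form `U`; on the remaining `n - s`
vertices place a Turán graph `T(n-s, t-1)` (color classes given by residues
mod `t-1`), and take all triples consisting of a vertex of `U` and an edge of
this Turán graph. -/
def HB (n s t : ℕ) : Finset (Finset (Fin n)) :=
  Finset.univ.filter (fun e => ∃ u v w : Fin n, e = {u, v, w} ∧ (u : ℕ) < s ∧
    s ≤ (v : ℕ) ∧ s ≤ (w : ℕ) ∧ v ≠ w ∧
    ((v : ℕ) - s) % (t - 1) ≠ ((w : ℕ) - s) % (t - 1))

def shadowGraph {α : Type*} (H : Set (Finset α)) : SimpleGraph α where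
  Adj a b := a ≠ b ∧ ∃ e ∈ H, a ∈ e ∧ b ∈ e
  symm := ⟨by rintro a b ⟨hab, e, he, ha, hb⟩; exact ⟨hab.symm, e, he, hb, ha⟩⟩
  loopless := ⟨fun _ h => h.1 rfl⟩

theorem shadowGraph_adj {α : Type*} {H : Set (Finset α)} {a b : α} :
    (shadowGraph H).Adj a b ↔ a ≠ b ∧ ∃ e ∈ H, a ∈ e ∧ b ∈ e :=
  Iff.rfl

theorem shadowGraph_adj_of_mem {α : Type*} {H : Set (Finset α)} {e : Finset α} (he : e ∈ H)
    {a b : α} (ha : a ∈ e) (hb : b ∈ e) (hab : a ≠ b) : (shadowGraph H).Adj a b :=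
  ⟨hab, e, he, ha, hb⟩

theorem HasCopy.colorable_shadowGraph {α : Type*} [DecidableEq α] {n k : ℕ}
    {F : Set (Finset α)} {H : Finset (Finset (Fin n))} (hFH : HasCopy F H)
    (hH : (shadowGraph (H : Set (Finset (Fin n)))).Colorable k) :
    (shadowGraph F).Colorable k := by
  obtain ⟨f, hf, hcopy⟩ := hFH
  refine hH.of_hom ⟨f, fun {a b} hadj => ?_⟩
  obtain ⟨hab, e, he, ha, hb⟩ := shadowGraph_adj.1 hadj
  exact ⟨hf.ne hab, e.image f, hcopy e he, mem_image_of_mem f ha, mem_image_of_mem f hb⟩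

theorem SimpleGraph.notMem_of_mem_edgeSet {α : Type*} {G : SimpleGraph α} {u : α}
    (hu : ∀ v, ¬ G.Adj u v) {z : Sym2 α} (hz : z ∈ G.edgeSet) : u ∉ z := fun h => by
  rw [← Sym2.other_spec h, SimpleGraph.mem_edgeSet] at hz
  exact hu _ hz

section ConeTriples

variable {α : Type*} [DecidableEq α] {U : Finset α} {G : SimpleGraph α} [Fintype G.edgeSet]

def coneTriples (U : Finset α) (G : SimpleGraph α) [Fintype G.edgeSet] : Finset (Finset α) :=
  (U ×ˢ G.edgeFinset).image fun p => insert p.1 p.2.toFinset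

theorem mem_coneTriples {e : Finset α} :
    e ∈ coneTriples U G ↔ ∃ u ∈ U, ∃ v w, G.Adj v w ∧ e = {u, v, w} := by
  simp only [coneTriples, mem_image, mem_product, Prod.exists]
  constructor
  · rintro ⟨u, z, ⟨hu, hz⟩, rfl⟩
    induction z using Sym2.ind with
    | _ v w => exact ⟨u, hu, v, w, by simpa using hz, by rw [Sym2.toFinset_mk_eq]⟩
  · rintro ⟨u, hu, v, w, hvw, rfl⟩
    exact ⟨u, s(v, w), ⟨hu, by simpa using hvw⟩, by rw [Sym2.toFinset_mk_eq]⟩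

theorem card_coneTriples (hU : ∀ u ∈ U, ∀ v, ¬ G.Adj u v) :
    #(coneTriples U G) = #U * #G.edgeFinset := by
  rw [coneTriples, card_image_of_injOn, card_product]
  rintro ⟨u, z⟩ huz ⟨u', z'⟩ huz' heq
  simp only [coe_product, Set.mem_prod, mem_coe, SimpleGraph.mem_edgeFinset] at huz huz' heq
  have hz : u ∉ z.toFinset := by simpa using G.notMem_of_mem_edgeSet (hU u huz.1) huz.2
  have hz' : u' ∉ z'.toFinset := by simpa using G.notMem_of_mem_edgeSet (hU u' huz'.1) huz'.2
  have huu' : u = u' := by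
    have hu : u ∈ insert u' z'.toFinset := heq ▸ mem_insert_self u _
    rcases mem_insert.1 hu with h | h
    · exact h
    · exact absurd (Sym2.mem_toFinset.1 h) (G.notMem_of_mem_edgeSet (hU u huz.1) huz'.2)
  subst huu'
  have hzz' : z.toFinset = z'.toFinset := by
    rw [← erase_insert hz, ← erase_insert hz', heq]
  simpa using Sym2.ext fun x => by rw [← Sym2.mem_toFinset, hzz', Sym2.mem_toFinset]

theorem matchingAtMost_coneTriples {n : ℕ} {U : Finset (Fin n)} {G : SimpleGraph (Fin n)}
    [Fintype G.edgeSet] : MatchingAtMost (coneTriples U G) #U := by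
  intro M hM hdisj
  refine card_le_card_of_forall_subsingleton (fun e u => u ∈ e) (fun e he => ?_) ?_
  · obtain ⟨u, hu, -, -, -, rfl⟩ := mem_coneTriples.1 (hM he)
    exact ⟨u, hu, mem_insert_self _ _⟩
  · intro u _ e ⟨he, hue⟩ f ⟨hf, huf⟩
    by_contra hef
    exact disjoint_left.1 (hdisj he hf hef) hue huf

theorem colorable_shadowGraph_coneTriples {k : ℕ} (hG : G.Colorable k)
    (hU : ∀ u ∈ U, ∀ v, ¬ G.Adj u v) :
    (shadowGraph (coneTriples U G : Set (Finset α))).Colorable (k + 1) := by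
  classical
  obtain ⟨C, hC⟩ := (SimpleGraph.colorable_iff_exists_bdd_nat_coloring k).1 hG
  refine (SimpleGraph.colorable_iff_exists_bdd_nat_coloring (k + 1)).2
    ⟨SimpleGraph.Coloring.mk (fun v => if v ∈ U then k else C v) ?_, fun v => ?_⟩
  · intro a b hadj
    obtain ⟨hab, e, he, ha, hb⟩ := shadowGraph_adj.1 hadj
    obtain ⟨u, hu, v, w, hvw, rfl⟩ := mem_coneTriples.1 he
    have hv : v ∉ U := fun h => hU v h w hvw
    have hw : w ∉ U := fun h => hU w h v hvw.symm
    simp only [mem_insert, mem_singleton] at ha hb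
    rcases ha with rfl | rfl | rfl <;> rcases hb with rfl | rfl | rfl <;>
      simp [hu, hv, hw, (hC _).ne, (hC _).ne', C.valid hvw, C.valid hvw.symm] at hab ⊢
  · show (if v ∈ U then k else C v) < k + 1
    split_ifs
    · exact lt_add_one k
    · exact (hC v).trans (lt_add_one k)

end ConeTriples

theorem turanGraph_colorable (n : ℕ) {r : ℕ} (hr : 0 < r) :
    (SimpleGraph.turanGraph n r).Colorable r :=
  (SimpleGraph.colorable_iff_exists_bdd_nat_coloring r).2
    ⟨SimpleGraph.Coloring.mk (fun v => (v : ℕ) % r) fun h => SimpleGraph.turanGraph_adj.1 h,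
      fun _ => Nat.mod_lt _ hr⟩

def shiftEmb (n s : ℕ) : Fin (n - s) ↪ Fin n :=
  ⟨fun a => ⟨s + a, by omega⟩, fun a b h => Fin.ext (by simpa using h)⟩

@[simp]
theorem shiftEmb_apply_val {n s : ℕ} (a : Fin (n - s)) : (shiftEmb n s a : ℕ) = s + a :=
  rfl

theorem HB_eq_coneTriples (n s t : ℕ) :
    HB n s t = coneTriples {v : Fin n | v < s}
      ((SimpleGraph.turanGraph (n - s) (t - 1)).map (shiftEmb n s)) := by
  ext e
  simp only [HB, mem_filter, mem_univ, true_and, mem_coneTriples, SimpleGraph.map_adj,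
    SimpleGraph.turanGraph_adj]
  constructor
  · rintro ⟨u, v, w, rfl, hu, hv, hw, -, hvw⟩
    exact ⟨u, hu, v, w, ⟨⟨v - s, by omega⟩, ⟨w - s, by omega⟩, hvw, Fin.ext (by simp; omega),
      Fin.ext (by simp; omega)⟩, rfl⟩
  · rintro ⟨u, hu, -, -, ⟨a, b, hab, rfl, rfl⟩, rfl⟩
    refine ⟨u, shiftEmb n s a, shiftEmb n s b, rfl, hu, ?_⟩
    simpa using ⟨ne_of_apply_ne (fun x : Fin (n - s) => (x : ℕ) % (t - 1)) hab, hab⟩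

theorem not_adj_map_shiftEmb {n s : ℕ} (G : SimpleGraph (Fin (n - s))) :
    ∀ u ∈ ({v : Fin n | v < s} : Finset (Fin n)), ∀ v, ¬ (G.map (shiftEmb n s)).Adj u v := by
  rintro u hu v ⟨-, a, b, -, rfl, -⟩
  simp at hu

theorem colorable_shadowGraph_HB (n s : ℕ) {t : ℕ} (ht : 2 ≤ t) :
    (shadowGraph (HB n s t : Set (Finset (Fin n)))).Colorable t := by
  obtain ⟨r, rfl⟩ : ∃ r, t = r + 1 := ⟨t - 1, by omega⟩
  have : NeZero r := ⟨by omega⟩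
  rw [HB_eq_coneTriples, Nat.add_sub_cancel]
  exact colorable_shadowGraph_coneTriples ((turanGraph_colorable _ (by omega)).map _)
    (not_adj_map_shiftEmb _)

theorem matchingAtMost_HB (n s t : ℕ) : MatchingAtMost (HB n s t) s := by
  intro M hM hdisj
  rw [HB_eq_coneTriples] at hM
  calc #M ≤ #{v : Fin n | v < s} := matchingAtMost_coneTriples M hM hdisj
    _ = min n s := Fin.card_filter_val_lt
    _ ≤ s := min_le_right n s

theorem card_HB (n s t : ℕ) : #(HB n s t) = s * turanEdges (n - s) (t - 1) := by
  classical
  have hE : #((SimpleGraph.turanGraph (n - s) (t - 1)).map (shiftEmb n s)).edgeFinset =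
      turanEdges (n - s) (t - 1) := by
    rw [turanEdges]
    convert SimpleGraph.card_edgeFinset_map (shiftEmb n s) _
  rw [HB_eq_coneTriples, card_coneTriples (not_adj_map_shiftEmb _), hE, Fin.card_filter_val_lt]
  rcases le_total s n with hsn | hns
  · rw [min_eq_right hsn]
  · rw [Nat.sub_eq_zero_of_le hns, turanEdges, SimpleGraph.edgeFinset_card]
    simp

theorem shadowGraph_FPtEdges_adj_inr {t : ℕ} {j k : Fin t} (hjk : j < k) :
    (shadowGraph (FPtEdges t)).Adj (Sum.inr j) (Sum.inr k) :=
  shadowGraph_adj_of_mem (⟨⟨j, by omega⟩, k, hjk, rfl⟩ : _ ∈ FPtEdges t) (by simp) (by simp)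
    (by simpa using hjk.ne)

theorem shadowGraph_FPtEdges_adj_inl_zero {t : ℕ} (ht : 2 ≤ t) (j : Fin t) :
    (shadowGraph (FPtEdges t)).Adj (Sum.inl ⟨0, by omega⟩) (Sum.inr j) := by
  by_cases hj : (j : ℕ) = 0
  · exact shadowGraph_adj_of_mem (⟨⟨0, by omega⟩, ⟨1, by omega⟩, Nat.one_pos, rfl⟩ : _ ∈ FPtEdges t)
      (by simp) (by simp [Fin.ext_iff, hj]) Sum.inl_ne_inr
  · exact shadowGraph_adj_of_mem (⟨⟨0, by omega⟩, j, Nat.pos_of_ne_zero hj, rfl⟩ : _ ∈ FPtEdges t)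
      (by simp) (by simp) Sum.inl_ne_inr

theorem not_cliqueFree_shadowGraph_FPtEdges {t : ℕ} (ht : 2 ≤ t) :
    ¬ (shadowGraph (FPtEdges t)).CliqueFree (t + 1) := by
  intro h
  refine h (cons (Sum.inl ⟨0, by omega⟩) (univ.map .inr) (by simp)) ⟨?_, by simp⟩
  rw [coe_cons, coe_map, coe_univ, Set.image_univ, SimpleGraph.isClique_insert]
  constructor
  · rintro _ ⟨j, rfl⟩ _ ⟨k, rfl⟩ hjk
    rcases lt_or_gt_of_ne (Sum.inr_injective.ne_iff.1 hjk) with h | h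
    · exact shadowGraph_FPtEdges_adj_inr h
    · exact (shadowGraph_FPtEdges_adj_inr h).symm
  · rintro _ ⟨j, rfl⟩ -
    exact shadowGraph_FPtEdges_adj_inl_zero ht j

theorem stmt_7_general {n s t : ℕ} (ht : 3 ≤ t) :
    ¬ HasCopy (FPtEdges t) (HB n s t) ∧ MatchingAtMost (HB n s t) s ∧
    (HB n s t).card = s * turanEdges (n - s) (t - 1) :=
  ⟨fun hcopy => not_cliqueFree_shadowGraph_FPtEdges (by omega)
      ((hcopy.colorable_shadowGraph (colorable_shadowGraph_HB n s (by omega))).cliqueFree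
        (lt_add_one t)),
    matchingAtMost_HB n s t, card_HB n s t⟩

theorem stmt_7 {n s t : ℕ} (ht : 3 ≤ t) (hsn : s ≤ n) :
    ¬ HasCopy (FPtEdges t) (HB n s t) ∧ MatchingAtMost (HB n s t) s ∧
    (HB n s t).card = s * turanEdges (n - s) (t - 1) :=
  stmt_7_general ht
end

section
/- Let J_t be the 3-graph on t+1 vertices consisting of a center vertex v₀ and t other vertices, whose edges are all triples containing v₀ (the full star). For each s ≥ 1, t ≥ 3, and sufficiently large n, the maximum number of edges in an n-vertex 3-graph that is J_t-free and has matching number at most s is s·t(n−s, t−1) + O(n). -/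
/-!
Let `D` be the set of vertices of degree at least `3(s+1)n`. Codegrees are at most `n`, so through
any `s + 1` vertices of `D` one can greedily choose pairwise disjoint edges; hence `|D| ≤ s`. The
link graph of every vertex is `K_t`-free, so by Turán's theorem every degree is at most
`t(n, t-1) ≤ t(n-s, t-1) + sn`, which bounds the edges meeting `D`. The edges avoiding `D` are all
met by the `≤ 3s` vertices of a maximum matching, each of degree `< 3(s+1)n`.

Conversely, join `s` apex vertices to every edge of `T(n-s, t-1)`. Every edge contains an apex, so
the matching number is `≤ s`; the link of an apex is the Turán graph and the link of any other
vertex is bipartite, so all links are `(t-1)`-colourable and the 3-graph is `J_t`-free.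
-/

open Finset

/-- Edge set of the full star `J_t` on `Fin (t+1)` with center `0`. -/
def JtEdges (t : ℕ) : Set (Finset (Fin (t + 1))) :=
  { e | ∃ i j : Fin (t + 1), i ≠ 0 ∧ j ≠ 0 ∧ i ≠ j ∧ e = {0, i, j} }

namespace SimpleGraph

variable {W : Type*}

lemma extremalNumber_succ_le (F : SimpleGraph W) (m : ℕ) :
    extremalNumber (m + 1) F ≤ extremalNumber m F + m := by
  rw [← Fintype.card_fin (m + 1), extremalNumber_le_iff]
  intro G _ hG
  classical
  have hdel := card_edgeFinset_deleteIncidenceSet_le_extremalNumber hG 0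
  rw [card_edgeFinset_deleteIncidenceSet, Fintype.card_fin, Nat.add_sub_cancel] at hdel
  have := G.degree_lt_card_verts 0
  rw [Fintype.card_fin] at this
  omega

lemma extremalNumber_add_le (F : SimpleGraph W) (m k : ℕ) :
    extremalNumber (m + k) F ≤ extremalNumber m F + k * (m + k) := by
  induction k with
  | zero => simp
  | succ k ih =>
    calc extremalNumber (m + (k + 1)) F ≤ extremalNumber (m + k) F + (m + k) :=
          extremalNumber_succ_le F (m + k)
      _ ≤ extremalNumber m F + (k + 1) * (m + (k + 1)) := by nlinarith

lemma colorable_turanGraph {m r : ℕ} (hr : 0 < r) : (turanGraph m r).Colorable r :=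
  ⟨.mk (fun v => ⟨v % r, Nat.mod_lt _ hr⟩) fun h => by
    simpa [Fin.ext_iff] using turanGraph_adj.1 h⟩

end SimpleGraph

lemma turanEdges_eq_extremalNumber {t : ℕ} (ht : 2 ≤ t) (m : ℕ) :
    turanEdges m (t - 1) = SimpleGraph.extremalNumber m (⊤ : SimpleGraph (Fin t)) := by
  have : Nontrivial (Fin t) := Fin.nontrivial_iff_two_le.2 ht
  rw [SimpleGraph.extremalNumber_top, Fintype.card_fin, turanEdges]

namespace ThreeGraph

variable {n : ℕ} {H : Finset (Finset (Fin n))}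

section Matchings

lemma card_filter_exists_mem_le_sum_degH (H : Finset (Finset (Fin n))) (D : Finset (Fin n)) :
    #(H.filter fun e => ∃ v ∈ D, v ∈ e) ≤ ∑ v ∈ D, degH H v := by
  calc #(H.filter fun e => ∃ v ∈ D, v ∈ e)
      ≤ #(D.biUnion fun v => H.filter (v ∈ ·)) := by
        refine card_le_card fun e he => ?_
        obtain ⟨heH, v, hvD, hve⟩ := mem_filter.1 he
        exact mem_biUnion.2 ⟨v, hvD, mem_filter.2 ⟨heH, hve⟩⟩
    _ ≤ ∑ v ∈ D, degH H v := card_biUnion_le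

lemma card_le_sum_degH_of_forall_exists_mem (D : Finset (Fin n))
    (hD : ∀ e ∈ H, ∃ v ∈ D, v ∈ e) : #H ≤ ∑ v ∈ D, degH H v := by
  simpa [filter_true_of_mem hD] using card_filter_exists_mem_le_sum_degH H D

lemma matchingAtMost_card_of_forall_inter_nonempty (S : Finset (Fin n))
    (hS : ∀ e ∈ H, (e ∩ S).Nonempty) : MatchingAtMost H #S := by
  intro M hMH hMp
  calc #M ≤ #(M.biUnion (· ∩ S)) :=
        card_le_card_biUnion (fun e he f hf hef => (hMp he hf hef).mono inter_subset_left
          inter_subset_left) fun e he => hS e (hMH he)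
    _ ≤ #S := card_le_card (biUnion_subset.2 fun _ _ => inter_subset_right)

lemma eq_insert_of_mem_of_mem (hU : Uniform3 H) {e : Finset (Fin n)} (he : e ∈ H) {v x : Fin n}
    (hvx : v ≠ x) (hv : v ∈ e) (hx : x ∈ e) : ∃ y, e = insert y {v, x} := by
  have hsub : {v, x} ⊆ e := insert_subset hv (singleton_subset_iff.2 hx)
  obtain ⟨y, hy⟩ : ∃ y, e \ {v, x} = {y} := by
    rw [← card_eq_one, card_sdiff_of_subset hsub, hU e he, card_pair hvx]
  exact ⟨y, by rw [insert_eq, ← hy, sdiff_union_of_subset hsub]⟩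

lemma degH_filter_mem_le (hU : Uniform3 H) {v x : Fin n} (hvx : v ≠ x) :
    degH (H.filter (v ∈ ·)) x ≤ n := by
  have hsub : (H.filter (v ∈ ·)).filter (x ∈ ·) ⊆
      univ.image fun y => (insert y {v, x} : Finset (Fin n)) := by
    intro e he
    simp only [mem_filter] at he
    obtain ⟨y, rfl⟩ := eq_insert_of_mem_of_mem hU he.1.1 hvx he.1.2 he.2
    exact mem_image_of_mem _ (mem_univ y)
  exact (card_le_card hsub).trans (card_image_le.trans (by simp))

lemma exists_mem_disjoint_of_card_mul_lt_degH (hU : Uniform3 H) {v : Fin n} {F : Finset (Fin n)}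
    (hvF : v ∉ F) (hF : #F * n < degH H v) : ∃ e ∈ H, v ∈ e ∧ Disjoint e F := by
  set Hv := H.filter (v ∈ ·)
  have hmeet : #(Hv.filter fun e => ∃ x ∈ F, x ∈ e) < #Hv :=
    calc #(Hv.filter fun e => ∃ x ∈ F, x ∈ e) ≤ ∑ x ∈ F, degH Hv x :=
          card_filter_exists_mem_le_sum_degH Hv F
      _ ≤ ∑ _x ∈ F, n :=
          sum_le_sum fun x hx => degH_filter_mem_le hU fun h => hvF (h ▸ hx)
      _ = #F * n := by rw [sum_const, smul_eq_mul]
      _ < #Hv := hF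
  obtain ⟨e, heHv, he⟩ := exists_mem_notMem_of_card_lt_card hmeet
  obtain ⟨heH, hve⟩ := mem_filter.1 heHv
  exact ⟨e, heH, hve, disjoint_left.2 fun x hxe hxF => he (mem_filter.2 ⟨heHv, x, hxF, hxe⟩)⟩

lemma exists_matching_of_le_degH (hU : Uniform3 H) {K : ℕ} (L F : Finset (Fin n))
    (hdeg : ∀ v ∈ L, K * n ≤ degH H v) (hFL : Disjoint F L) (hcard : #F + 3 * #L ≤ K) :
    ∃ M ⊆ H, (M : Set (Finset (Fin n))).Pairwise (fun e f => Disjoint e f) ∧ #M = #L ∧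
      ∀ e ∈ M, Disjoint e F := by
  induction L using Finset.induction_on generalizing F with
  | empty => exact ⟨∅, empty_subset _, by simp, by simp, by simp⟩
  | @insert a L haL ih =>
    rw [card_insert_of_notMem haL] at hcard
    have haF : a ∉ F ∪ L := by
      simpa [haL] using disjoint_right.1 hFL (mem_insert_self a L)
    have hlt : #(F ∪ L) * n < degH H a := by
      have : #(F ∪ L) < K := (card_union_le F L).trans_lt (by omega)
      exact (Nat.mul_lt_mul_right a.pos).2 this |>.trans_le (hdeg a (mem_insert_self a L))
    obtain ⟨e, heH, hae, heFL⟩ := exists_mem_disjoint_of_card_mul_lt_degH hU haF hlt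
    obtain ⟨M, hMH, hMp, hMc, hMF⟩ := ih (F ∪ e)
      (fun v hv => hdeg v (mem_insert_of_mem hv))
      (disjoint_union_left.2 ⟨disjoint_of_subset_right (subset_insert a L) hFL,
        disjoint_of_subset_right subset_union_right heFL⟩)
      (by have := card_union_le F e; rw [hU e heH] at this; omega)
    have heM : e ∉ M := fun h =>
      disjoint_left.1 (hMF e h) hae (mem_union_right F hae)
    refine ⟨insert e M, insert_subset heH hMH, ?_, by rw [card_insert_of_notMem heM, hMc,
      card_insert_of_notMem haL], ?_⟩
    · rw [coe_insert]
      refine hMp.insert fun f hf _ => ?_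
      have hfe : Disjoint f e := disjoint_union_right.1 (hMF f hf) |>.2
      exact ⟨hfe.symm, hfe⟩
    · intro f hf
      rcases mem_insert.1 hf with rfl | hf
      · exact disjoint_union_right.1 heFL |>.1
      · exact disjoint_union_right.1 (hMF f hf) |>.1

lemma card_filter_le_degH_le (hU : Uniform3 H) {s : ℕ} (hm : MatchingAtMost H s) :
    #(univ.filter fun v => 3 * (s + 1) * n ≤ degH H v) ≤ s := by
  by_contra! hD
  obtain ⟨L, hLD, hL⟩ := exists_subset_card_eq hD
  obtain ⟨M, hMH, hMp, hM, -⟩ := exists_matching_of_le_degH hU L ∅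
    (fun v hv => (mem_filter.1 (hLD hv)).2) (disjoint_empty_left L) (by simp [hL])
  have := hm M hMH hMp
  omega

lemma exists_cover_of_matchingAtMost (hU : Uniform3 H) {s : ℕ} (hm : MatchingAtMost H s) :
    ∃ U : Finset (Fin n), #U ≤ 3 * s ∧ ∀ e ∈ H, ∃ x ∈ U, x ∈ e := by
  set matchings := H.powerset.filter fun M : Finset (Finset (Fin n)) =>
    (M : Set (Finset (Fin n))).Pairwise (fun e f => Disjoint e f)
  obtain ⟨M, hM, hMmax⟩ := exists_max_image matchings card ⟨∅, by simp [matchings]⟩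
  obtain ⟨hMH, hMp⟩ : M ⊆ H ∧ (M : Set (Finset (Fin n))).Pairwise (fun e f => Disjoint e f) := by
    simpa [matchings] using hM
  refine ⟨M.biUnion id, ?_, fun e he => ?_⟩
  · calc #(M.biUnion id) ≤ ∑ e ∈ M, #e := card_biUnion_le
      _ = 3 * #M := by rw [sum_congr rfl fun e he => hU e (hMH he), sum_const, smul_eq_mul,
          mul_comm]
      _ ≤ 3 * s := by have := hm M hMH hMp; omega
  · by_contra! hdisj
    have hdisj' : ∀ f ∈ M, Disjoint e f := fun f hf =>
      disjoint_left.2 fun x hxe hxf => hdisj x (mem_biUnion.2 ⟨f, hf, hxf⟩) hxe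
    have heM : e ∉ M := fun h => by
      obtain ⟨x, hx⟩ := card_pos.1 (by rw [hU e he]; norm_num : 0 < #e)
      exact disjoint_left.1 (hdisj' e h) hx hx
    have hins : insert e M ∈ matchings := by
      simp only [matchings, mem_filter, mem_powerset, coe_insert]
      exact ⟨insert_subset he hMH, hMp.insert fun f hf _ => ⟨hdisj' f hf, (hdisj' f hf).symm⟩⟩
    have := hMmax _ hins
    rw [card_insert_of_notMem heM] at this
    omega

lemma card_le_of_forall_degH_le (hU : Uniform3 H) {s d : ℕ} (hm : MatchingAtMost H s)
    (hd : ∀ v, degH H v ≤ d) : #H ≤ 3 * s * d := by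
  obtain ⟨U, hU3, hcover⟩ := exists_cover_of_matchingAtMost hU hm
  calc #H ≤ ∑ v ∈ U, degH H v := card_le_sum_degH_of_forall_exists_mem U hcover
    _ ≤ #U * d := by simpa using sum_le_sum fun v (_ : v ∈ U) => hd v
    _ ≤ 3 * s * d := Nat.mul_le_mul_right d hU3

theorem card_le_of_matchingAtMost (hU : Uniform3 H) {s Δ : ℕ} (hm : MatchingAtMost H s)
    (hΔ : ∀ v, degH H v ≤ Δ) : #H ≤ s * Δ + 9 * s * (s + 1) * n := by
  set D := univ.filter fun v => 3 * (s + 1) * n ≤ degH H v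
  set H' := H.filter fun e => ¬ ∃ v ∈ D, v ∈ e
  have hmeet : #(H.filter fun e => ∃ v ∈ D, v ∈ e) ≤ s * Δ :=
    calc _ ≤ ∑ v ∈ D, degH H v := card_filter_exists_mem_le_sum_degH H D
      _ ≤ #D * Δ := by simpa using sum_le_sum fun v (_ : v ∈ D) => hΔ v
      _ ≤ s * Δ := Nat.mul_le_mul_right Δ (card_filter_le_degH_le hU hm)
  have hdeg' : ∀ v, degH H' v ≤ 3 * (s + 1) * n := by
    intro v
    by_cases hv : v ∈ D
    · suffices H'.filter (v ∈ ·) = ∅ by simp [degH, this]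
      exact filter_eq_empty_iff.2 fun e he hve => (mem_filter.1 he).2 ⟨v, hv, hve⟩
    · have : degH H' v ≤ degH H v := card_le_card (filter_subset_filter _ (filter_subset _ H))
      simp only [D, mem_filter, mem_univ, true_and, not_le] at hv
      omega
  have havoid : #H' ≤ 3 * s * (3 * (s + 1) * n) :=
    card_le_of_forall_degH_le (fun e he => hU e (filter_subset _ H he))
      (fun M hM => hm M (hM.trans (filter_subset _ H))) hdeg'
  calc #H = #(H.filter fun e => ∃ v ∈ D, v ∈ e) + #H' :=
        (card_filter_add_card_filter_not _).symm
    _ ≤ s * Δ + 3 * s * (3 * (s + 1) * n) := add_le_add hmeet havoid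
    _ = s * Δ + 9 * s * (s + 1) * n := by ring

end Matchings

section Link

def link (H : Finset (Finset (Fin n))) (v : Fin n) : SimpleGraph (Fin n) where
  Adj u w := u ≠ w ∧ {v, u, w} ∈ H
  symm := ⟨fun _ _ h => ⟨h.1.symm, by rw [pair_comm]; exact h.2⟩⟩
  loopless := ⟨fun _ h => h.1 rfl⟩

@[simp] lemma link_adj {v u w : Fin n} : (link H v).Adj u w ↔ u ≠ w ∧ {v, u, w} ∈ H := Iff.rfl

instance (H : Finset (Finset (Fin n))) (v : Fin n) : DecidableRel (link H v).Adj :=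
  fun _ _ => decidable_of_iff' _ link_adj

lemma ne_of_link_adj (hU : Uniform3 H) {v u w : Fin n} (h : (link H v).Adj u w) : v ≠ u := by
  rintro rfl
  have := hU _ (link_adj.1 h).2
  rw [insert_eq_of_mem (mem_insert_self v _)] at this
  exact absurd (card_le_two.trans_eq' this) (by norm_num)

theorem hasCopy_JtEdges_iff (hU : Uniform3 H) {t : ℕ} (ht : 2 ≤ t) :
    HasCopy (JtEdges t) H ↔ ∃ v, ¬ (link H v).CliqueFree t := by
  simp_rw [SimpleGraph.not_cliqueFree_iff_top_isContained]
  constructor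
  · rintro ⟨f, hf, hedge⟩
    have hsucc : Function.Injective (Fin.succ : Fin t → Fin (t + 1)) := Fin.succ_injective _
    refine ⟨f 0, ⟨⟨fun i => f i.succ, fun {i j} hij =>
      link_adj.2 ⟨fun h => hij (hsucc (hf h)), ?_⟩⟩, hf.comp hsucc⟩⟩
    simpa using hedge {0, i.succ, j.succ}
      ⟨_, _, Fin.succ_ne_zero i, Fin.succ_ne_zero j, fun h => hij (hsucc h), rfl⟩
  · rintro ⟨v, ⟨φ⟩⟩
    have hv : v ∉ Set.range φ := by
      rintro ⟨i, hi⟩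
      obtain ⟨j, hji⟩ := Fintype.exists_ne_of_one_lt_card (by simp; omega) i
      exact ne_of_link_adj hU (φ.toHom.map_adj hji.symm) hi.symm
    refine ⟨Fin.cons v φ, Fin.cons_injective_iff.2 ⟨hv, φ.injective⟩, ?_⟩
    rintro e ⟨i, j, hi, hj, hij, rfl⟩
    obtain ⟨i, rfl⟩ := Fin.exists_succ_eq.2 hi
    obtain ⟨j, rfl⟩ := Fin.exists_succ_eq.2 hj
    simpa using (link_adj.1 (φ.toHom.map_adj fun h => hij (congrArg Fin.succ h))).2

lemma degH_le_card_edgeFinset_link (hU : Uniform3 H) (v : Fin n) :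
    degH H v ≤ #(link H v).edgeFinset := by
  refine card_le_card_of_surjOn (fun z => insert v z.toFinset) fun e he => ?_
  obtain ⟨heH, hve⟩ := mem_filter.1 he
  obtain ⟨a, b, hab, he⟩ := card_eq_two.1 (by rw [card_erase_of_mem hve, hU e heH] :
    #(e.erase v) = 2)
  have hins : insert v {a, b} = e := by rw [← he, insert_erase hve]
  exact ⟨s(a, b), by simp [hab, hins, heH], by simp [Sym2.toFinset_mk_eq, hins]⟩

lemma degH_le_turanEdges_add (hU : Uniform3 H) {t : ℕ} (ht : 2 ≤ t)
    (hC : ¬ HasCopy (JtEdges t) H) (v : Fin n) {m : ℕ} (hm : m ≤ n) :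
    degH H v ≤ turanEdges m (t - 1) + (n - m) * n := by
  have hfree : (⊤ : SimpleGraph (Fin t)).Free (link H v) := by
    rw [← SimpleGraph.cliqueFree_iff_top_free, Fintype.card_fin]
    by_contra h
    exact hC ((hasCopy_JtEdges_iff hU ht).2 ⟨v, h⟩)
  calc degH H v ≤ #(link H v).edgeFinset := degH_le_card_edgeFinset_link hU v
    _ ≤ SimpleGraph.extremalNumber n (⊤ : SimpleGraph (Fin t)) := by
        simpa using SimpleGraph.card_edgeFinset_le_extremalNumber hfree
    _ ≤ turanEdges m (t - 1) + (n - m) * n := by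
        rw [turanEdges_eq_extremalNumber ht]
        simpa [Nat.add_sub_cancel' hm] using
          SimpleGraph.extremalNumber_add_le (⊤ : SimpleGraph (Fin t)) m (n - m)

end Link

section ApexJoin

variable {s m : ℕ}

def apexEdge (i : Fin s) (z : Sym2 (Fin m)) : Finset (Fin (s + m)) :=
  insert (Fin.castAdd m i) (z.map (Fin.natAdd s)).toFinset

lemma natAdd_ne_castAdd (a : Fin m) (i : Fin s) : Fin.natAdd s a ≠ Fin.castAdd m i := by
  rw [Ne, Fin.ext_iff, Fin.val_natAdd, Fin.val_castAdd]
  omega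

@[simp] lemma castAdd_mem_apexEdge {i j : Fin s} {z : Sym2 (Fin m)} :
    Fin.castAdd m j ∈ apexEdge i z ↔ j = i := by
  simp [apexEdge, Sym2.mem_map, natAdd_ne_castAdd]

@[simp] lemma natAdd_mem_apexEdge {i : Fin s} {z : Sym2 (Fin m)} {a : Fin m} :
    Fin.natAdd s a ∈ apexEdge i z ↔ a ∈ z := by
  simp [apexEdge, Sym2.mem_map, natAdd_ne_castAdd]

lemma apexEdge_injective :
    Function.Injective fun p : Fin s × Sym2 (Fin m) => apexEdge p.1 p.2 := by
  rintro ⟨i, z⟩ ⟨j, w⟩ h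
  simp only at h
  have hij : i = j := by
    rw [← castAdd_mem_apexEdge (z := w), ← h, castAdd_mem_apexEdge]
  refine Prod.ext hij (Sym2.ext fun a => ?_)
  rw [← natAdd_mem_apexEdge (i := i), h, natAdd_mem_apexEdge]

lemma card_apexEdge {i : Fin s} {a b : Fin m} (hab : a ≠ b) : #(apexEdge i s(a, b)) = 3 := by
  rw [apexEdge, Sym2.map_mk, Sym2.toFinset_mk_eq]
  exact card_eq_three.2 ⟨_, _, _, (natAdd_ne_castAdd a i).symm, (natAdd_ne_castAdd b i).symm,
    fun h => hab ((Fin.natAdd_inj s).1 h), rfl⟩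

variable (s) in
def apexJoin (G : SimpleGraph (Fin m)) [DecidableRel G.Adj] : Finset (Finset (Fin (s + m))) :=
  (univ ×ˢ G.edgeFinset).image fun p => apexEdge p.1 p.2

variable {G : SimpleGraph (Fin m)} [DecidableRel G.Adj]

lemma mem_apexJoin {e : Finset (Fin (s + m))} :
    e ∈ apexJoin s G ↔ ∃ i, ∃ z ∈ G.edgeSet, apexEdge i z = e := by
  simp [apexJoin]

lemma card_apexJoin : #(apexJoin s G) = s * #G.edgeFinset := by
  rw [apexJoin, card_image_of_injective _ apexEdge_injective, card_product, card_univ,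
    Fintype.card_fin]

lemma uniform3_apexJoin : Uniform3 (apexJoin s G) := by
  intro e he
  obtain ⟨i, z, hz, rfl⟩ := mem_apexJoin.1 he
  induction z using Sym2.ind with
  | _ a b => exact card_apexEdge (G.ne_of_adj hz)

lemma matchingAtMost_apexJoin : MatchingAtMost (apexJoin s G) s := by
  simpa using matchingAtMost_card_of_forall_inter_nonempty (univ.map (Fin.castAddEmb m))
    fun e he => by
      obtain ⟨i, z, -, rfl⟩ := mem_apexJoin.1 he
      exact ⟨Fin.castAdd m i, by simp⟩

lemma exists_apexEdge_of_link_adj {x u w : Fin (s + m)} (h : (link (apexJoin s G) x).Adj u w) :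
    ∃ i, ∃ z ∈ G.edgeSet, x ∈ apexEdge i z ∧ u ∈ apexEdge i z ∧ w ∈ apexEdge i z := by
  obtain ⟨i, z, hz, he⟩ := mem_apexJoin.1 (link_adj.1 h).2
  exact ⟨i, z, hz, by simp [he]⟩

lemma colorable_link_apexJoin_castAdd {k : ℕ} (hG : G.Colorable k) (hk : 0 < k) (j : Fin s) :
    (link (apexJoin s G) (Fin.castAdd m j)).Colorable k := by
  obtain ⟨c⟩ := hG
  refine ⟨.mk (Fin.addCases (fun _ => ⟨0, hk⟩) c) fun {u w} h => ?_⟩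
  obtain ⟨i, z, hz, hx, hu, hw⟩ := exists_apexEdge_of_link_adj h
  rw [castAdd_mem_apexEdge] at hx
  subst hx
  have hxu := ne_of_link_adj uniform3_apexJoin h
  have hxw := ne_of_link_adj uniform3_apexJoin h.symm
  induction u using Fin.addCases with
  | left j' => exact absurd (by rw [castAdd_mem_apexEdge.1 hu]) hxu
  | right a =>
    induction w using Fin.addCases with
    | left j' => exact absurd (by rw [castAdd_mem_apexEdge.1 hw]) hxw
    | right b =>
      have hab : a ≠ b := fun hab => h.ne (by rw [hab])
      rw [natAdd_mem_apexEdge] at hu hw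
      rw [(Sym2.mem_and_mem_iff hab).1 ⟨hu, hw⟩, SimpleGraph.mem_edgeSet] at hz
      simpa using c.valid hz

lemma colorable_link_apexJoin_natAdd (a₀ : Fin m) :
    (link (apexJoin s G) (Fin.natAdd s a₀)).Colorable 2 := by
  refine ⟨.mk (Fin.addCases (fun _ => 0) (fun _ => 1)) fun {u w} h => ?_⟩
  obtain ⟨i, z, -, hx, hu, hw⟩ := exists_apexEdge_of_link_adj h
  induction u using Fin.addCases with
  | left j =>
    induction w using Fin.addCases with
    | left j' =>
      rw [castAdd_mem_apexEdge] at hu hw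
      exact absurd (by rw [hu, hw]) h.ne
    | right b => simp
  | right a =>
    induction w using Fin.addCases with
    | left j' => simp
    | right b =>
      rw [natAdd_mem_apexEdge] at hx hu hw
      have ha : a₀ ≠ a := fun ha => ne_of_link_adj uniform3_apexJoin h (by rw [ha])
      have hb : a₀ ≠ b := fun hb => ne_of_link_adj uniform3_apexJoin h.symm (by rw [hb])
      have hab : a ≠ b := fun hab => h.ne (by rw [hab])
      rw [(Sym2.mem_and_mem_iff ha).1 ⟨hx, hu⟩, Sym2.mem_iff] at hw
      tauto

theorem not_hasCopy_JtEdges_apexJoin {t : ℕ} (ht : 3 ≤ t) (hG : G.Colorable (t - 1)) :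
    ¬ HasCopy (JtEdges t) (apexJoin s G) := by
  rw [hasCopy_JtEdges_iff uniform3_apexJoin (by omega : 2 ≤ t)]
  push Not
  intro x
  have hcol : (link (apexJoin s G) x).Colorable (t - 1) := by
    induction x using Fin.addCases with
    | left j => exact colorable_link_apexJoin_castAdd hG (by omega) j
    | right a => exact (colorable_link_apexJoin_natAdd a).mono (by omega)
  exact hcol.cliqueFree (by omega)

end ApexJoin

end ThreeGraph

open ThreeGraph in
theorem stmt_9_general (s t : ℕ) (ht : 3 ≤ t) :
    ∃ C n₀ : ℕ, ∀ n ≥ n₀,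
      (∀ H : Finset (Finset (Fin n)), Uniform3 H → ¬ HasCopy (JtEdges t) H →
          MatchingAtMost H s → H.card ≤ s * turanEdges (n - s) (t - 1) + C * n) ∧
      (∃ H : Finset (Finset (Fin n)), Uniform3 H ∧ ¬ HasCopy (JtEdges t) H ∧
          MatchingAtMost H s ∧ s * turanEdges (n - s) (t - 1) ≤ H.card + C * n) := by
  refine ⟨10 * s * s + 9 * s, s, fun n hn => ⟨fun H hU hC hm => ?_, ?_⟩⟩
  · have hdeg (v : Fin n) : degH H v ≤ turanEdges (n - s) (t - 1) + s * n := by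
      simpa [Nat.sub_sub_self hn] using degH_le_turanEdges_add hU (by omega) hC v (Nat.sub_le n s)
    calc #H ≤ s * (turanEdges (n - s) (t - 1) + s * n) + 9 * s * (s + 1) * n :=
          card_le_of_matchingAtMost hU hm hdeg
      _ = s * turanEdges (n - s) (t - 1) + (10 * s * s + 9 * s) * n := by ring
  · obtain ⟨m, rfl⟩ := Nat.exists_eq_add_of_le hn
    refine ⟨apexJoin s (SimpleGraph.turanGraph m (t - 1)), uniform3_apexJoin, ?_,
      matchingAtMost_apexJoin, ?_⟩
    · exact not_hasCopy_JtEdges_apexJoin ht (SimpleGraph.colorable_turanGraph (by omega))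
    · rw [card_apexJoin, Nat.add_sub_cancel_left, turanEdges]
      exact Nat.le_add_right _ _

theorem stmt_9 (s t : ℕ) (hs : 1 ≤ s) (ht : 3 ≤ t) :
    ∃ C n₀ : ℕ, ∀ n ≥ n₀,
      (∀ H : Finset (Finset (Fin n)), Uniform3 H → ¬ HasCopy (JtEdges t) H →
          MatchingAtMost H s → H.card ≤ s * turanEdges (n - s) (t - 1) + C * n) ∧
      (∃ H : Finset (Finset (Fin n)), Uniform3 H ∧ ¬ HasCopy (JtEdges t) H ∧
          MatchingAtMost H s ∧ s * turanEdges (n - s) (t - 1) ≤ H.card + C * n) :=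
  stmt_9_general s t ht
end

section
/- Let K₄³⁻ be the 3-graph on 4 vertices with 3 edges (K₄³ minus one edge). For n ≥ 150, the maximum number of edges in an n-vertex 3-graph that is K₄³⁻-free and has no two disjoint edges (matching number at most 1) equals ⌊(n−1)²/4⌋. -/
open Finset

/-- Edge set of `K₄³⁻`: the 3-graph on 4 vertices with edges `123, 124, 134`. -/
def K43mEdges : Set (Finset (Fin 4)) :=
  {({0, 1, 2} : Finset (Fin 4)), {0, 1, 3}, {0, 2, 3}}

/-! ### Auxiliary lemmas -/

section Aux

open SimpleGraph

lemma arith0 (m : ℕ) : (m/2) * ((m+1)/2) = m^2/4 := by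
  obtain ⟨k, rfl | rfl⟩ := Nat.even_or_odd' m
  · rw [show (2*k)/2 = k by omega, show (2*k+1)/2 = k by omega,
      show (2*k)^2 = 4*(k*k) by ring, Nat.mul_div_cancel_left _ (by norm_num : 0<4)]
  · rw [show (2*k+1)/2 = k by omega, show (2*k+1+1)/2 = k+1 by omega,
      show (2*k+1)^2 = 4*(k*(k+1))+1 by ring]
    rw [Nat.mul_add_div (by norm_num)]
    simp

lemma count_range (m : ℕ) : #((Finset.range m).filter (fun v => v % 2 = 0)) = (m+1)/2
    ∧ #((Finset.range m).filter (fun v => v % 2 = 1)) = m/2 := by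
  induction m with
  | zero => simp
  | succ m ih =>
    rw [Finset.range_add_one, Finset.filter_insert, Finset.filter_insert]
    rcases Nat.even_or_odd m with h | h
    · rw [Nat.even_iff] at h
      rw [if_pos h, if_neg (by omega), Finset.card_insert_of_notMem (by simp)]
      omega
    · rw [Nat.odd_iff] at h
      rw [if_neg (by omega), if_pos h, Finset.card_insert_of_notMem (by simp)]
      omega

lemma count_fin (m : ℕ) (p : ℕ → Prop) [DecidablePred p] :
    #((univ : Finset (Fin m)).filter (fun v => p v.val)) = #((Finset.range m).filter p) := by
  rw [Finset.card_filter, Finset.card_filter]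
  exact Fin.sum_univ_eq_sum_range (fun i => if p i then 1 else 0) m

lemma turan2_count (m : ℕ) : #(turanGraph m 2).edgeFinset = (m/2) * ((m+1)/2) := by
  have hs := (turanGraph m 2).sum_degrees_eq_twice_card_edges
  have hdeg : ∀ v : Fin m, (turanGraph m 2).degree v
      = if v.val % 2 = 0 then m/2 else (m+1)/2 := by
    intro v
    rw [degree, neighborFinset_eq_filter]
    have : ∀ w : Fin m, (turanGraph m 2).Adj v w ↔
        (fun x => if v.val % 2 = 0 then x % 2 = 1 else x % 2 = 0) w.val := by
      intro w
      simp only [turanGraph]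
      by_cases h : v.val % 2 = 0
      · rw [if_pos h]; omega
      · rw [if_neg h]; omega
    rw [filter_congr (fun w _ => by rw [this w])]
    rw [count_fin m (fun x => if v.val % 2 = 0 then x % 2 = 1 else x % 2 = 0)]
    rcases Nat.decEq (v.val % 2) 0 with h | h
    · rw [filter_congr (fun w _ => by rw [if_neg h]), if_neg h]
      exact (count_range m).1
    · rw [filter_congr (fun w _ => by rw [if_pos h]), if_pos h]
      exact (count_range m).2
  rw [Finset.sum_congr rfl (fun v _ => hdeg v), Finset.sum_ite, Finset.sum_const,
    Finset.sum_const, smul_eq_mul, smul_eq_mul] at hs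
  rw [count_fin m (fun x => x % 2 = 0), (count_range m).1] at hs
  have : #(univ.filter (fun v : Fin m => ¬ v.val % 2 = 0)) = m/2 := by
    rw [filter_congr (fun w _ => by constructor <;> intro h <;> omega :
      ∀ w : Fin m, w ∈ univ → (¬ w.val % 2 = 0 ↔ (fun x => x % 2 = 1) w.val))]
    rw [count_fin m (fun x => x % 2 = 1)]
    exact (count_range m).2
  rw [this, Nat.mul_comm ((m+1)/2) (m/2)] at hs
  omega

lemma mantel {m : ℕ} (G : SimpleGraph (Fin m)) [DecidableRel G.Adj]
    (hG : G.CliqueFree 3) : #G.edgeFinset ≤ m^2/4 := by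
  have h := (isTuranMaximal_turanGraph (n := m) (r := 2) (by norm_num)).2 hG
  rw [turan2_count, arith0] at h
  exact h

/-- link graph of vertex v -/
def linkGraph {n : ℕ} (H : Finset (Finset (Fin n))) (v : Fin n) : SimpleGraph (Fin n) where
  Adj a b := a ≠ b ∧ a ≠ v ∧ b ≠ v ∧ insert v {a, b} ∈ H
  symm := by
    constructor; intro a b h
    refine ⟨h.1.symm, h.2.2.1, h.2.1, ?_⟩
    rw [Finset.pair_comm b a]
    exact h.2.2.2
  loopless := by constructor; intro a h; exact h.1 rfl

instance {n : ℕ} (H : Finset (Finset (Fin n))) (v : Fin n) :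
    DecidableRel (linkGraph H v).Adj := fun a b => by
  dsimp [linkGraph]; infer_instance

lemma card_le_link {n : ℕ} (H : Finset (Finset (Fin n))) (hu : Uniform3 H)
    (v : Fin n) (hv : ∀ e ∈ H, v ∈ e) :
    #H ≤ #(linkGraph H v).edgeFinset := by
  apply Finset.card_le_card_of_surjOn
    (fun z => insert v (Sym2.lift ⟨fun a b => ({a,b} : Finset (Fin n)),
      fun a b => Finset.pair_comm a b⟩ z))
  intro e he
  simp only [Finset.mem_coe] at he ⊢
  have hve := hv e he
  have h2 : (e.erase v).card = 2 := by
    rw [Finset.card_erase_of_mem hve, hu e he]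
  obtain ⟨a, b, hab, hab2⟩ := Finset.card_eq_two.mp h2
  have ha : a ∈ e.erase v := by rw [hab2]; simp
  have hb : b ∈ e.erase v := by rw [hab2]; simp
  have hav : a ≠ v := (Finset.mem_erase.mp ha).1
  have hbv : b ≠ v := (Finset.mem_erase.mp hb).1
  have hins : insert v {a,b} = e := by
    rw [← hab2, Finset.insert_erase hve]
  refine ⟨s(a,b), ?_, ?_⟩
  · rw [Finset.mem_coe, SimpleGraph.mem_edgeFinset]
    exact ⟨hab, hav, hbv, by rwa [hins]⟩
  · simpa using hins

lemma link_cliqueFree {n : ℕ} (H : Finset (Finset (Fin n))) (v : Fin n)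
    (hfree : ¬ HasCopy K43mEdges H) : (linkGraph H v).CliqueFree 3 := by
  intro s hs
  rw [is3Clique_iff] at hs
  obtain ⟨a, b, c, hab, hac, hbc, -⟩ := hs
  apply hfree
  refine ⟨![v, a, b, c], ?_, ?_⟩
  · have h1 : v ≠ a := Ne.symm hab.2.1
    have h2 : v ≠ b := Ne.symm hab.2.2.1
    have h3 : v ≠ c := Ne.symm hac.2.2.1
    intro i j hij
    fin_cases i <;> fin_cases j <;> simp only [Matrix.cons_val_zero, Matrix.cons_val_one,
        Matrix.head_cons, Matrix.cons_val_two, Matrix.tail_cons, Matrix.cons_val_three,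
        Matrix.cons_val_fin_one] at hij <;>
      first
        | rfl
        | exact absurd hij h1 | exact absurd hij h2 | exact absurd hij h3
        | exact absurd hij h1.symm | exact absurd hij h2.symm | exact absurd hij h3.symm
        | exact absurd hij hab.1 | exact absurd hij hac.1 | exact absurd hij hbc.1
        | exact absurd hij hab.1.symm | exact absurd hij hac.1.symm | exact absurd hij hbc.1.symm
  · rintro e he
    simp only [K43mEdges, Set.mem_insert_iff, Set.mem_singleton_iff] at he
    rcases he with rfl | rfl | rfl
    · rw [show ({0,1,2} : Finset (Fin 4)).image ![v,a,b,c] = insert v {a, b} by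
        simp [Finset.image_insert]]
      exact hab.2.2.2
    · rw [show ({0,1,3} : Finset (Fin 4)).image ![v,a,b,c] = insert v {a, c} by
        simp [Finset.image_insert]]
      exact hac.2.2.2
    · rw [show ({0,2,3} : Finset (Fin 4)).image ![v,a,b,c] = insert v {b, c} by
        simp [Finset.image_insert]]
      exact hbc.2.2.2

lemma transfer_bound {m : ℕ} (v : Fin (m+1)) (G : SimpleGraph (Fin (m+1))) [DecidableRel G.Adj]
    (hiso : ∀ a, ¬ G.Adj v a) (hcf : G.CliqueFree 3) :
    #G.edgeFinset ≤ m^2/4 := by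
  let ι : Fin m ↪ Fin (m+1) := ⟨v.succAbove, Fin.succAbove_right_injective⟩
  have hle : #G.edgeFinset ≤ #(G.comap ι).edgeFinset := by
    apply Finset.card_le_card_of_surjOn (Sym2.map ι)
    intro z hz
    simp only [Finset.mem_coe, mem_edgeFinset] at hz ⊢
    induction z with
    | _ a b =>
      have hadj : G.Adj a b := hz
      have hav : a ≠ v := fun h => hiso b (h ▸ hadj)
      have hbv : b ≠ v := fun h => hiso a (h ▸ hadj.symm)
      obtain ⟨i, hi⟩ := Fin.exists_succAbove_eq hav
      obtain ⟨j, hj⟩ := Fin.exists_succAbove_eq hbv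
      refine ⟨s(i,j), ?_, ?_⟩
      · rw [Finset.mem_coe, mem_edgeFinset]
        show G.Adj (ι i) (ι j)
        simp only [ι, Function.Embedding.coeFn_mk]
        rw [hi, hj]; exact hadj
      · simp [Sym2.map_pair_eq, ι, hi, hj]
  exact hle.trans (mantel _ (hcf.comap ⟨(Embedding.comap ι G).toCopy⟩))

lemma inter_of_match {n : ℕ} {H : Finset (Finset (Fin n))} (hm : MatchingAtMost H 1)
    {e f : Finset (Fin n)} (he : e ∈ H) (hf : f ∈ H) (hne : e ≠ f) : (e ∩ f).Nonempty := by
  rw [← Finset.not_disjoint_iff_nonempty_inter]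
  intro hd
  have hsub : ({e, f} : Finset (Finset (Fin n))) ⊆ H := by
    intro x hx; rcases Finset.mem_insert.mp hx with rfl | hx
    · exact he
    · rw [Finset.mem_singleton.mp hx]; exact hf
  have hpw : (({e, f} : Finset (Finset (Fin n))) : Set (Finset (Fin n))).Pairwise
      (fun e f => Disjoint e f) := by
    intro x hx y hy hxy
    simp only [Finset.coe_insert, Finset.coe_singleton, Set.mem_insert_iff,
      Set.mem_singleton_iff] at hx hy
    rcases hx with rfl | rfl <;> rcases hy with rfl | rfl
    · exact absurd rfl hxy
    · exact hd
    · exact hd.symm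
    · exact absurd rfl hxy
  have := hm _ hsub hpw
  rw [Finset.card_insert_of_notMem (by simpa using hne), Finset.card_singleton] at this
  omega

lemma pairdeg {n : ℕ} (H : Finset (Finset (Fin n))) (hu : Uniform3 H)
    {p q : Fin n} (hpq : p ≠ q) : #(H.filter fun h => p ∈ h ∧ q ∈ h) ≤ n := by
  have : #(H.filter fun h => p ∈ h ∧ q ∈ h)
      ≤ #((univ : Finset (Fin n)).image (fun t => ({t} : Finset (Fin n)))) := by
    apply Finset.card_le_card_of_injOn (fun h => h \ {p, q})
    · intro h hh
      rw [Finset.mem_coe, Finset.mem_filter] at hh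
      have hsub : {p, q} ⊆ h := by
        intro x hx; rcases Finset.mem_insert.mp hx with rfl | hx
        · exact hh.2.1
        · rw [Finset.mem_singleton.mp hx]; exact hh.2.2
      have hc : #(h \ {p, q}) = 1 := by
        rw [Finset.card_sdiff_of_subset hsub, hu h hh.1,
          Finset.card_insert_of_notMem (by simpa using hpq), Finset.card_singleton]
      obtain ⟨t, ht⟩ := Finset.card_eq_one.mp hc
      show h \ {p, q} ∈ _
      rw [ht, Finset.mem_coe]
      exact Finset.mem_image.mpr ⟨t, Finset.mem_univ t, rfl⟩
    · intro h1 hh1 h2 hh2 heq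
      simp only [Finset.coe_filter, Set.mem_setOf_eq] at hh1 hh2
      have hsub1 : {p, q} ⊆ h1 := by
        intro x hx; rcases Finset.mem_insert.mp hx with rfl | hx
        · exact hh1.2.1
        · rw [Finset.mem_singleton.mp hx]; exact hh1.2.2
      have hsub2 : {p, q} ⊆ h2 := by
        intro x hx; rcases Finset.mem_insert.mp hx with rfl | hx
        · exact hh2.2.1
        · rw [Finset.mem_singleton.mp hx]; exact hh2.2.2
      calc h1 = h1 \ {p,q} ∪ {p,q} := (Finset.sdiff_union_of_subset hsub1).symm
        _ = h2 \ {p,q} ∪ {p,q} := by rw [show h1 \ {p,q} = h2 \ {p,q} from heq]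
        _ = h2 := Finset.sdiff_union_of_subset hsub2
  refine this.trans ?_
  refine Finset.card_image_le.trans ?_
  simp

lemma nonstar_bound {n : ℕ} (H : Finset (Finset (Fin n))) (hu : Uniform3 H)
    (hm : MatchingAtMost H 1) (hns : ∀ v : Fin n, ∃ e ∈ H, v ∉ e) :
    #H ≤ 7*n + 64 := by
  by_cases hH1 : #H ≤ 1
  · omega
  by_cases hone : ∃ e ∈ H, ∃ f ∈ H, #(e ∩ f) = 1
  · -- case: two edges meeting in exactly one vertex
    obtain ⟨e, he, f, hf, h1⟩ := hone
    obtain ⟨x, hxef⟩ := Finset.card_eq_one.mp h1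
    have hxe : x ∈ e := Finset.mem_of_mem_inter_left (α := Fin n)
      (hxef ▸ Finset.mem_singleton_self x)
    have hxf : x ∈ f := Finset.mem_of_mem_inter_right (α := Fin n)
      (hxef ▸ Finset.mem_singleton_self x)
    obtain ⟨g, hg, hxg⟩ := hns x
    set P : Finset (Fin n × Fin n) :=
      (g.image fun w => (x, w)) ∪ ((e.erase x) ×ˢ (f.erase x)) with hP
    have hsub : H ⊆ P.biUnion (fun pq => H.filter fun h => pq.1 ∈ h ∧ pq.2 ∈ h) := by
      intro h hh
      rw [Finset.mem_biUnion]
      by_cases hxh : x ∈ h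
      · have hhg : h ≠ g := fun hh2 => hxg (hh2 ▸ hxh)
        obtain ⟨w, hw⟩ := inter_of_match hm hh hg hhg
        rw [Finset.mem_inter] at hw
        exact ⟨(x, w), Finset.mem_union_left _ (Finset.mem_image.mpr ⟨w, hw.2, rfl⟩),
          Finset.mem_filter.mpr ⟨hh, hxh, hw.1⟩⟩
      · have hhe : h ≠ e := fun h2 => hxh (h2 ▸ hxe)
        have hhf : h ≠ f := fun h2 => hxh (h2 ▸ hxf)
        obtain ⟨p, hp⟩ := inter_of_match hm hh he hhe
        obtain ⟨q, hq⟩ := inter_of_match hm hh hf hhf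
        rw [Finset.mem_inter] at hp hq
        refine ⟨(p, q), Finset.mem_union_right _ ?_, Finset.mem_filter.mpr ⟨hh, hp.1, hq.1⟩⟩
        rw [Finset.mem_product]
        exact ⟨Finset.mem_erase.mpr ⟨fun h2 => hxh (h2 ▸ hp.1), hp.2⟩,
          Finset.mem_erase.mpr ⟨fun h2 => hxh (h2 ▸ hq.1), hq.2⟩⟩
    have hPcard : #P ≤ 7 := by
      refine (Finset.card_union_le _ _).trans ?_
      have h1 : #(g.image fun w => (x, w)) ≤ 3 := by
        refine Finset.card_image_le.trans ?_
        rw [hu g hg]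
      have h2 : #((e.erase x) ×ˢ (f.erase x)) ≤ 4 := by
        rw [Finset.card_product, Finset.card_erase_of_mem hxe, Finset.card_erase_of_mem hxf,
          hu e he, hu f hf]
      omega
    have hdiag : ∀ pq ∈ P, #(H.filter fun h => pq.1 ∈ h ∧ pq.2 ∈ h) ≤ n := by
      intro pq hpq
      rcases Finset.mem_union.mp hpq with hpq | hpq
      · obtain ⟨w, hw, rfl⟩ := Finset.mem_image.mp hpq
        exact pairdeg H hu (fun h2 => hxg (by rw [show x = w from h2]; exact hw))
      · rw [Finset.mem_product] at hpq
        refine pairdeg H hu (fun h2 => ?_)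
        have h3 : pq.1 ∈ e ∩ f := Finset.mem_inter.mpr
          ⟨(Finset.mem_erase.mp hpq.1).2, h2 ▸ (Finset.mem_erase.mp hpq.2).2⟩
        rw [hxef, Finset.mem_singleton] at h3
        exact (Finset.mem_erase.mp hpq.1).1 h3
    calc #H ≤ #(P.biUnion (fun pq => H.filter fun h => pq.1 ∈ h ∧ pq.2 ∈ h)) :=
          Finset.card_le_card hsub
      _ ≤ ∑ pq ∈ P, #(H.filter fun h => pq.1 ∈ h ∧ pq.2 ∈ h) := Finset.card_biUnion_le
      _ ≤ ∑ _pq ∈ P, n := Finset.sum_le_sum hdiag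
      _ = #P * n := by rw [Finset.sum_const, smul_eq_mul]
      _ ≤ 7 * n := Nat.mul_le_mul_right n hPcard
      _ ≤ 7 * n + 64 := Nat.le_add_right _ _
  · -- case: all pairs of distinct edges meet in ≥ 2 vertices
    push_neg at hone
    have hH2 : 1 < #H := by omega
    obtain ⟨e, he, f, hf, hne⟩ := Finset.one_lt_card.mp hH2
    have hef1 : (e ∩ f).Nonempty := inter_of_match hm he hf hne
    have hef2 : #(e ∩ f) = 2 := by
      have hub : #(e ∩ f) ≤ 3 := by
        refine (Finset.card_le_card (Finset.inter_subset_left)).trans ?_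
        rw [hu e he]
      have hne1 := hone e he f hf
      have hne3 : #(e ∩ f) ≠ 3 := by
        intro h3
        have : e ∩ f = e := Finset.eq_of_subset_of_card_le Finset.inter_subset_left
          (by rw [hu e he, h3])
        have hef : e ⊆ f := this ▸ Finset.inter_subset_right
        exact hne (Finset.eq_of_subset_of_card_le hef (by rw [hu e he, hu f hf]))
      have := Finset.card_pos.mpr hef1
      omega
    obtain ⟨a, b, hab, hab2⟩ := Finset.card_eq_two.mp hef2
    have key : ∀ h ∈ H, (a ∈ h ∧ b ∈ h) ∨ h ⊆ e ∪ f := by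
      intro h hh
      by_cases habh : a ∈ h ∧ b ∈ h
      · exact Or.inl habh
      right
      have hae : a ∈ e ∩ f := by rw [hab2]; simp
      have hbe : b ∈ e ∩ f := by rw [hab2]; simp
      have hhe : h ≠ e := by
        rintro rfl
        exact habh ⟨Finset.mem_of_mem_inter_left hae, Finset.mem_of_mem_inter_left hbe⟩
      have hhf : h ≠ f := by
        rintro rfl
        exact habh ⟨Finset.mem_of_mem_inter_right hae, Finset.mem_of_mem_inter_right hbe⟩
      have h2e : 2 ≤ #(h ∩ e) := by
        have := Finset.card_pos.mpr (inter_of_match hm hh he hhe)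
        have := hone h hh e he
        omega
      have h2f : 2 ≤ #(h ∩ f) := by
        have := Finset.card_pos.mpr (inter_of_match hm hh hf hhf)
        have := hone h hh f hf
        omega
      have hsmall : #(h ∩ (e ∩ f)) ≤ 1 := by
        rw [hab2]
        have hs : h ∩ {a, b} ⊆ {a, b} := Finset.inter_subset_right
        have hc2 : #({a, b} : Finset (Fin n)) = 2 := by
          rw [Finset.card_insert_of_notMem (by simpa using hab), Finset.card_singleton]
        have : #(h ∩ {a, b}) ≠ 2 := by
          intro h2
          have : h ∩ {a, b} = {a, b} := Finset.eq_of_subset_of_card_le hs (by omega)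
          refine habh ⟨?_, ?_⟩
          · exact Finset.mem_of_mem_inter_left (α := Fin n)
              (this ▸ (Finset.mem_insert_self a {b}))
          · exact Finset.mem_of_mem_inter_left (α := Fin n)
              (this ▸ (Finset.mem_insert.mpr (Or.inr (Finset.mem_singleton_self b))))
        have := (Finset.card_le_card hs).trans_eq hc2
        omega
      have hinter : (h ∩ e) ∩ (h ∩ f) = h ∩ (e ∩ f) := by
        ext y; simp only [Finset.mem_inter]; tauto
      have hcup : h ∩ (e ∪ f) = (h ∩ e) ∪ (h ∩ f) := Finset.inter_union_distrib_left h e f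
      have hcard := Finset.card_union_add_card_inter (h ∩ e) (h ∩ f)
      rw [hinter] at hcard
      have h3 : 3 ≤ #(h ∩ (e ∪ f)) := by rw [hcup]; omega
      have : h ∩ (e ∪ f) = h := Finset.eq_of_subset_of_card_le Finset.inter_subset_left
        (by rw [hu h hh]; omega)
      rw [← this]
      exact Finset.inter_subset_right
    have hsub : H ⊆ (H.filter fun h => a ∈ h ∧ b ∈ h) ∪ (e ∪ f).powerset := by
      intro h hh
      rcases key h hh with hk | hk
      · exact Finset.mem_union_left _ (Finset.mem_filter.mpr ⟨hh, hk⟩)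
      · exact Finset.mem_union_right _ (Finset.mem_powerset.mpr hk)
    calc #H ≤ #((H.filter fun h => a ∈ h ∧ b ∈ h) ∪ (e ∪ f).powerset) :=
          Finset.card_le_card hsub
      _ ≤ #(H.filter fun h => a ∈ h ∧ b ∈ h) + #(e ∪ f).powerset := Finset.card_union_le _ _
      _ ≤ n + 64 := by
          have hp := pairdeg H hu hab
          have hcup : #(e ∪ f) ≤ 6 := by
            refine (Finset.card_union_le _ _).trans ?_
            rw [hu e he, hu f hf]
          have : #(e ∪ f).powerset ≤ 64 := by
            rw [Finset.card_powerset]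
            calc 2 ^ #(e ∪ f) ≤ 2 ^ 6 := Nat.pow_le_pow_right (by norm_num) hcup
              _ = 64 := by norm_num
          omega
      _ ≤ 7 * n + 64 := by omega

lemma construction (n : ℕ) (hn : 150 ≤ n) :
    ∃ H : Finset (Finset (Fin n)), Uniform3 H ∧ ¬ HasCopy K43mEdges H ∧
      MatchingAtMost H 1 ∧ #H = (n-1)^2/4 := by
  haveI : NeZero n := ⟨by omega⟩
  set A : Finset (Fin n) := univ.filter (fun u : Fin n => u.val % 2 = 1) with hA
  set B : Finset (Fin n) := univ.filter (fun u : Fin n => u.val % 2 = 0 ∧ u.val ≠ 0) with hB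
  refine ⟨(A ×ˢ B).image (fun p => ({0, p.1, p.2} : Finset (Fin n))), ?_, ?_, ?_, ?_⟩
  case _ =>
    -- Uniform3
    rintro e he
    obtain ⟨⟨a, b⟩, hab, rfl⟩ := Finset.mem_image.mp he
    rw [Finset.mem_product] at hab
    obtain ⟨ha, hb⟩ := hab
    rw [hA, Finset.mem_filter] at ha
    rw [hB, Finset.mem_filter] at hb
    obtain ⟨-, ha⟩ := ha
    obtain ⟨-, hb, hb0'⟩ := hb
    have ha : (a:ℕ) % 2 = 1 := ha
    have hb : (b:ℕ) % 2 = 0 := hb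
    have hb0' : (b:ℕ) ≠ 0 := hb0'
    have ha0 : a ≠ 0 := fun h => by rw [h] at ha; simp at ha
    have hb0 : b ≠ 0 := fun h => hb0' (by rw [h]; simp)
    have hab2 : a ≠ b := fun h => by rw [h] at ha; omega
    rw [Finset.card_insert_of_notMem (by simp [Ne.symm ha0, Ne.symm hb0]),
      Finset.card_insert_of_notMem (by simpa using hab2), Finset.card_singleton]
  case _ =>
    -- no copy
    rintro ⟨f, hinj, hedges⟩
    have hE1 := hedges {0,1,2} (by simp [K43mEdges])
    have hE2 := hedges {0,1,3} (by simp [K43mEdges])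
    have hE3 := hedges {0,2,3} (by simp [K43mEdges])
    rw [show ({0,1,2} : Finset (Fin 4)).image f = {f 0, f 1, f 2} by
      simp [Finset.image_insert]] at hE1
    rw [show ({0,1,3} : Finset (Fin 4)).image f = {f 0, f 1, f 3} by
      simp [Finset.image_insert]] at hE2
    rw [show ({0,2,3} : Finset (Fin 4)).image f = {f 0, f 2, f 3} by
      simp [Finset.image_insert]] at hE3
    -- structure of edges
    have hstruct : ∀ h ∈ (A ×ˢ B).image (fun p => ({0, p.1, p.2} : Finset (Fin n))),
        (0 : Fin n) ∈ h ∧ ∀ x y : Fin n, x ∈ h → y ∈ h → x ≠ y → x ≠ 0 → y ≠ 0 →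
          x.val % 2 ≠ y.val % 2 := by
      rintro h hh
      obtain ⟨⟨a, b⟩, hab, rfl⟩ := Finset.mem_image.mp hh
      rw [Finset.mem_product] at hab
      obtain ⟨ha, hb⟩ := hab
      rw [hA, Finset.mem_filter] at ha
      rw [hB, Finset.mem_filter] at hb
      obtain ⟨-, ha⟩ := ha
      obtain ⟨-, hb, hb0'⟩ := hb
      have ha : (a:ℕ) % 2 = 1 := ha
      have hb : (b:ℕ) % 2 = 0 := hb
      refine ⟨Finset.mem_insert_self _ _, ?_⟩
      intro x y hx hy hxy hx0 hy0
      simp only [Finset.mem_insert, Finset.mem_singleton] at hx hy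
      rcases hx with rfl | rfl | rfl
      · exact absurd rfl hx0
      all_goals rcases hy with rfl | rfl | rfl
      · exact absurd rfl hy0
      · exact absurd rfl hxy
      · omega
      · exact absurd rfl hy0
      · omega
      · exact absurd rfl hxy
    obtain ⟨h01, hpar1⟩ := hstruct _ hE1
    obtain ⟨h02, hpar2⟩ := hstruct _ hE2
    obtain ⟨h03, hpar3⟩ := hstruct _ hE3
    -- f 0 = 0
    have hf0 : f 0 = 0 := by
      by_contra hf0
      simp only [Finset.mem_insert, Finset.mem_singleton] at h01 h02 h03
      rcases h01 with h | h | h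
      · exact hf0 h.symm
      · rcases h03 with h' | h' | h'
        · exact hf0 h'.symm
        · exact (by decide : ¬ (1 : Fin 4) = 2) (hinj (h.symm.trans h'))
        · exact (by decide : ¬ (1 : Fin 4) = 3) (hinj (h.symm.trans h'))
      · rcases h02 with h' | h' | h'
        · exact hf0 h'.symm
        · exact (by decide : ¬ (2 : Fin 4) = 1) (hinj (h.symm.trans h'))
        · exact (by decide : ¬ (2 : Fin 4) = 3) (hinj (h.symm.trans h'))
    have hne : ∀ i : Fin 4, i ≠ 0 → f i ≠ 0 := by
      intro i hi h
      exact hi (hinj (h.trans hf0.symm))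
    have h12 : (f 1).val % 2 ≠ (f 2).val % 2 := by
      refine hpar1 _ _ (by simp) (by simp) (fun h => ?_) (hne 1 (by decide))
        (hne 2 (by decide))
      exact (by decide : ¬ (1 : Fin 4) = 2) (hinj h)
    have h13 : (f 1).val % 2 ≠ (f 3).val % 2 := by
      refine hpar2 _ _ (by simp) (by simp) (fun h => ?_) (hne 1 (by decide))
        (hne 3 (by decide))
      exact (by decide : ¬ (1 : Fin 4) = 3) (hinj h)
    have h23 : (f 2).val % 2 ≠ (f 3).val % 2 := by
      refine hpar3 _ _ (by simp) (by simp) (fun h => ?_) (hne 2 (by decide))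
        (hne 3 (by decide))
      exact (by decide : ¬ (2 : Fin 4) = 3) (hinj h)
    omega
  case _ =>
    -- matching at most 1
    intro M hM hpw
    by_contra hc
    have hM2 : 1 < #M := by omega
    obtain ⟨e, he, f, hf, hef⟩ := Finset.one_lt_card.mp hM2
    have hd := hpw (Finset.mem_coe.mpr he) (Finset.mem_coe.mpr hf) hef
    have h0e : (0 : Fin n) ∈ e := by
      obtain ⟨⟨a, b⟩, -, rfl⟩ := Finset.mem_image.mp (hM he)
      exact Finset.mem_insert_self _ _
    have h0f : (0 : Fin n) ∈ f := by
      obtain ⟨⟨a, b⟩, -, rfl⟩ := Finset.mem_image.mp (hM hf)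
      exact Finset.mem_insert_self _ _
    exact Finset.disjoint_left.mp hd h0e h0f
  case _ =>
    -- cardinality
    rw [Finset.card_image_of_injOn, Finset.card_product]
    · have hAcard : #A = n/2 := by
        rw [hA, count_fin n (fun x => x % 2 = 1)]
        exact (count_range n).2
      have hBcard : #B = (n+1)/2 - 1 := by
        rw [hB, count_fin n (fun x => x % 2 = 0 ∧ x ≠ 0)]
        have hset : (Finset.range n).filter (fun x => x % 2 = 0 ∧ x ≠ 0)
            = ((Finset.range n).filter (fun x => x % 2 = 0)).erase 0 := by
          ext y
          simp only [Finset.mem_filter, Finset.mem_erase, Finset.mem_range]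
          tauto
        rw [hset, Finset.card_erase_of_mem (by simp; omega), (count_range n).1]
      rw [hAcard, hBcard]
      have h := arith0 (n-1)
      rw [show n-1+1 = n by omega] at h
      rw [show (n+1)/2 - 1 = (n-1)/2 by omega, Nat.mul_comm]
      exact h
    · rintro ⟨a, b⟩ hab ⟨a', b'⟩ hab' heq
      simp only [Finset.coe_product, Set.mem_prod, Finset.mem_coe] at hab hab'
      obtain ⟨ha, hb⟩ := hab
      obtain ⟨ha', hb'⟩ := hab'
      rw [hA, Finset.mem_filter] at ha ha'
      rw [hB, Finset.mem_filter] at hb hb'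
      simp only at heq
      have h0 : ∀ u : Fin n, u.val % 2 = 1 → u ≠ 0 := by
        intro u hu h; rw [h] at hu; simp at hu
      have hmem : a ∈ ({0, a', b'} : Finset (Fin n)) := by
        rw [← heq]; simp
      have hmem' : b ∈ ({0, a', b'} : Finset (Fin n)) := by
        rw [← heq]; simp
      simp only [Finset.mem_insert, Finset.mem_singleton] at hmem hmem'
      have haa : a = a' := by
        rcases hmem with h | h | h
        · exact absurd h (h0 a ha.2)
        · exact h
        · exfalso; rw [h] at ha; omega
      have hbb : b = b' := by
        rcases hmem' with h | h | h
        · exfalso; rw [h] at hb; simp at hb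
        · exfalso; rw [h] at hb; omega
        · exact h
      rw [haa, hbb]

end Aux

theorem stmt_10 (n : ℕ) (hn : 150 ≤ n) :
    IsGreatest {m | ∃ H : Finset (Finset (Fin n)), Uniform3 H ∧
      ¬ HasCopy K43mEdges H ∧ MatchingAtMost H 1 ∧ H.card = m}
      ((n - 1) ^ 2 / 4) := by
  constructor
  · obtain ⟨H, h1, h2, h3, h4⟩ := construction n hn
    exact ⟨H, h1, h2, h3, h4⟩
  · rintro m ⟨H, hu, hfree, hmatch, rfl⟩
    by_cases hstar : ∃ v : Fin n, ∀ e ∈ H, v ∈ e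
    · obtain ⟨v, hv⟩ := hstar
      obtain ⟨m', rfl⟩ : ∃ m', n = m' + 1 := ⟨n - 1, by omega⟩
      have h1 := card_le_link H hu v hv
      have h2 := link_cliqueFree H v hfree
      have hiso : ∀ a, ¬ (linkGraph H v).Adj v a := fun a ha => ha.2.1 rfl
      have h3 := transfer_bound v (linkGraph H v) hiso h2
      simpa using h1.trans h3
    · push_neg at hstar
      have hb := nonstar_bound H hu hmatch hstar
      have hmul : 149 * (n - 1) ≤ (n - 1) * (n - 1) :=
        Nat.mul_le_mul_right _ (by omega)
      have hsq : (n - 1) ^ 2 = (n - 1) * (n - 1) := by ring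
      have h4 : 149 * (n - 1) / 4 ≤ (n - 1) ^ 2 / 4 := by
        rw [hsq]; exact Nat.div_le_div_right hmul
      have h5 : 7 * n + 64 ≤ 149 * (n - 1) / 4 := by omega
      omega
end
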